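/- arXiv:1307.2537 — 13 statements merged into one kernel-verified Lean document; each statement's English description precedes it below -/
import Mathlib

section
/- If a utility maximization game with n players is (λ,μ)-coalitionally smooth for some λ,μ ≥ 0, then every strong Nash equilibrium s satisfies SW(s) ≥ (λ/(1+μ)) · OPT, where OPT is the maximum social welfare over all strategy profiles. -/
/-!
Strong equilibria can be peeled: every nonempty coalition `C` has a member who does not gain
when `C` deviates to `s*`. Removing such players one at a time orders all players so that no
player `i` gains from the deviation of the suffix `N_{π(i)}`. Summing over `i` and applying
smoothness at `s` gives `SW(s) ≥ λ·OPT - μ·SW(s)`.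
-/

open Finset

/-- Coalitional deviation: players in `C` switch to `t`, others keep `s`. -/
def dev {n : ℕ} {S : Fin n → Type*} (s t : ∀ i, S i) (C : Finset (Fin n)) : ∀ i, S i :=
  fun i => if i ∈ C then t i else s i

/-- `N_{π(i)} = {j : π(j) ≥ π(i)}`, the suffix of the permutation starting at `i`. -/
def suffixSet {n : ℕ} (π : Equiv.Perm (Fin n)) (i : Fin n) : Finset (Fin n) :=
  Finset.univ.filter fun j => π i ≤ π j

theorem List.Nodup.getElem_mem_drop_iff {α : Type*} {l : List α} (hl : l.Nodup) {j : ℕ}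
    (hj : j < l.length) (k : ℕ) : l[j] ∈ l.drop k ↔ k ≤ j := by
  rw [List.mem_drop_iff_getElem]
  constructor
  · rintro ⟨m, hm, hmj⟩
    have := hl.getElem_inj_iff.1 hmj
    omega
  · intro hkj
    exact ⟨j - k, by omega, by simp only [Nat.add_sub_cancel' hkj]⟩

theorem exists_nodup_toFinset_eq_forall_drop {α : Type*} [DecidableEq α]
    (P : α → Finset α → Prop) (hP : ∀ C : Finset α, C.Nonempty → ∃ i ∈ C, P i C)
    (C : Finset α) :
    ∃ l : List α, l.Nodup ∧ l.toFinset = C ∧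
      ∀ k (hk : k < l.length), P l[k] (l.drop k).toFinset := by
  induction C using Finset.strongInduction with
  | H C ih =>
    obtain rfl | hC := C.eq_empty_or_nonempty
    · exact ⟨[], List.nodup_nil, rfl, fun k hk => absurd hk (Nat.not_lt_zero k)⟩
    obtain ⟨i, hiC, hi⟩ := hP C hC
    obtain ⟨l, hl, hlC, hlP⟩ := ih (C.erase i) (C.erase_ssubset hiC)
    have hil : i ∉ l := fun h => C.notMem_erase i (hlC ▸ List.mem_toFinset.2 h)
    have hcons : (i :: l).toFinset = C := by
      rw [List.toFinset_cons, hlC, insert_erase hiC]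
    refine ⟨i :: l, List.nodup_cons.2 ⟨hil, hl⟩, hcons, ?_⟩
    rintro (_ | k) hk
    · simpa [hcons] using hi
    · simpa using hlP k (by simpa using hk)

theorem exists_perm_forall_suffixSet {n : ℕ} (P : Fin n → Finset (Fin n) → Prop)
    (hP : ∀ C : Finset (Fin n), C.Nonempty → ∃ i ∈ C, P i C) :
    ∃ π : Equiv.Perm (Fin n), ∀ i, P i (suffixSet π i) := by
  obtain ⟨l, hl, hl_univ, hlP⟩ := exists_nodup_toFinset_eq_forall_drop P hP univ
  have hmem (i : Fin n) : i ∈ l := List.mem_toFinset.1 (hl_univ ▸ mem_univ i)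
  have hlen : l.length = n := by
    rw [← List.toFinset_card_of_nodup hl, hl_univ, card_univ, Fintype.card_fin]
  set e := hl.getEquivOfForallMemList l hmem
  have he (i : Fin n) : l[(e.symm i : ℕ)] = i := e.apply_symm_apply i
  refine ⟨e.symm.trans (finCongr hlen), fun i => ?_⟩
  have hsuffix : suffixSet (e.symm.trans (finCongr hlen)) i = (l.drop (e.symm i)).toFinset := by
    refine Finset.ext fun j => ?_
    rw [List.mem_toFinset]
    conv_rhs => rw [← he j]
    rw [hl.getElem_mem_drop_iff]
    simp only [suffixSet, mem_filter, mem_univ, true_and]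
    rfl
  simpa [hsuffix, he] using hlP (e.symm i) (e.symm i).isLt

theorem strong_price_of_anarchy_utility_general {n : ℕ} {S : Fin n → Type*}
    (u : ∀ _ : Fin n, (∀ j, S j) → ℝ)
    (lam mu OPT : ℝ) (hmu : 0 ≤ mu)
    (sstar : ∀ j, S j)
    (hsmooth : ∀ (s : ∀ j, S j) (π : Equiv.Perm (Fin n)),
      ∑ i, u i (dev s sstar (suffixSet π i)) ≥ lam * OPT - mu * ∑ i, u i s)
    (s : ∀ j, S j)
    (hSNE : ∀ C : Finset (Fin n), C.Nonempty → ∀ sC : ∀ j, S j,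
      ∃ i ∈ C, u i s ≥ u i (dev s sC C)) :
    ∑ i, u i s ≥ lam / (1 + mu) * OPT := by
  obtain ⟨π, hπ⟩ := exists_perm_forall_suffixSet (fun i C => u i (dev s sstar C) ≤ u i s)
    fun C hC => hSNE C hC sstar
  have hsuffix : ∑ i, u i (dev s sstar (suffixSet π i)) ≤ ∑ i, u i s :=
    sum_le_sum fun i _ => hπ i
  have hsmooth_s := hsmooth s π
  rw [ge_iff_le, div_mul_eq_mul_div, div_le_iff₀ (by linarith)]
  linarith

/-- in a (λ,μ)-coalitionally smooth utility game, every strong Nash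
equilibrium has social welfare at least λ/(1+μ) of the optimal. -/
theorem strong_price_of_anarchy_utility {n : ℕ} {S : Fin n → Type*}
    (u : ∀ _ : Fin n, (∀ j, S j) → ℝ)
    (hu : ∀ i s, 0 ≤ u i s)
    (lam mu OPT : ℝ) (hlam : 0 ≤ lam) (hmu : 0 ≤ mu)
    (hOPT_ub : ∀ s : ∀ j, S j, ∑ i, u i s ≤ OPT)
    (hOPT_ach : ∃ s : ∀ j, S j, ∑ i, u i s = OPT)
    (sstar : ∀ j, S j)
    (hsmooth : ∀ (s : ∀ j, S j) (π : Equiv.Perm (Fin n)),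
      ∑ i, u i (dev s sstar (suffixSet π i)) ≥ lam * OPT - mu * ∑ i, u i s)
    (s : ∀ j, S j)
    (hSNE : ∀ C : Finset (Fin n), C.Nonempty → ∀ sC : ∀ j, S j,
      ∃ i ∈ C, u i s ≥ u i (dev s sC C)) :
    ∑ i, u i s ≥ lam / (1 + mu) * OPT :=
  strong_price_of_anarchy_utility_general u lam mu OPT hmu sstar hsmooth s hSNE
end

section
/- In a (λ,μ)-coalitionally smooth utility maximization game, every strong coarse correlated equilibrium D satisfies E_{s∼D}[SW(s)] ≥ (λ/(1+μ)) · OPT. -/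
/-!
Order the players by repeatedly peeling them off: the set `C` of players not yet ordered is a
coalition, so the strong coarse correlated equilibrium condition, applied to the deviation of `C`
to `s*`, names a player `i ∈ C` who does not gain from it; put `i` next and recurse on `C \ {i}`.
The result is a permutation `π` such that no player gains from the deviation of its suffix
`N_{π(i)}` to `s*`. Summing these inequalities over the players and applying smoothness
pointwise gives `E[SW] ≥ λ·OPT − μ·E[SW]`.
-/

open Finset

open Equiv

theorem le_swap_apply_iff {α : Type*} [DecidableEq α] [LE α] {p a b : α}
    (ha : p ≤ a) (hb : p ≤ b) (y : α) : p ≤ swap a b y ↔ p ≤ y := by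
  rcases eq_or_ne y a with rfl | hya
  · simp [ha, hb]
  rcases eq_or_ne y b with rfl | hyb
  · simp [ha, hb]
  rw [swap_apply_of_ne_of_ne hya hyb]

section Peeling

variable {n : ℕ}

theorem suffixSet_trans_swap {π : Perm (Fin n)} {a b i : Fin n}
    (ha : π.trans (swap a b) i ≤ a) (hb : π.trans (swap a b) i ≤ b) :
    suffixSet (π.trans (swap a b)) i = univ.filter fun j => π.trans (swap a b) i ≤ π j := by
  ext j
  simp only [suffixSet, mem_filter, mem_univ, true_and]
  exact le_swap_apply_iff ha hb (π j)

theorem exists_perm_good_of_lt {good : Finset (Fin n) → Fin n → Prop}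
    (h : ∀ C : Finset (Fin n), C.Nonempty → ∃ i ∈ C, good C i) :
    ∀ k ≤ n, ∃ π : Perm (Fin n), ∀ i, (π i : ℕ) < k → good (suffixSet π i) i := by
  intro k
  induction k with
  | zero => exact fun _ => ⟨1, fun _ hi => absurd hi (Nat.not_lt_zero _)⟩
  | succ k ih =>
    intro hk
    obtain ⟨π, hπ⟩ := ih (by omega)
    set p : Fin n := ⟨k, hk⟩
    obtain ⟨i, hiC, hi⟩ := h (univ.filter fun j => p ≤ π j) ⟨π.symm p, by simp⟩
    have hpi : p ≤ π i := (mem_filter.mp hiC).2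
    -- Moving `i` to position `k` fixes the earlier positions and the set of later ones.
    refine ⟨π.trans (swap (π i) p), fun j hj => ?_⟩
    rcases eq_or_ne j i with rfl | hji
    · have hj : π.trans (swap (π j) p) j = p := by simp
      rwa [suffixSet_trans_swap (by rw [hj]; exact hpi) (by rw [hj]), hj]
    · have hπij : π j ≠ π i := π.injective.ne hji
      have hjp : π j ≠ p := by
        rintro hjp
        have hik : (π i : ℕ) < k + 1 := by simpa [hjp] using hj
        exact hπij (Fin.ext (by rw [hjp]; exact (Nat.le_antisymm (Nat.le_of_lt_succ hik) hpi).symm))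
      have hj' : π.trans (swap (π i) p) j = π j := swap_apply_of_ne_of_ne hπij hjp
      have hjk : (π j : ℕ) < k := by
        rw [hj'] at hj
        exact lt_of_le_of_ne (Nat.le_of_lt_succ hj) (fun h => hjp (Fin.ext h))
      have hjle : π j ≤ p := Fin.le_def.mpr hjk.le
      rw [suffixSet_trans_swap (by rw [hj']; exact hjle.trans hpi) (by rw [hj']; exact hjle), hj']
      exact hπ j hjk

theorem exists_perm_forall_good_suffixSet {good : Finset (Fin n) → Fin n → Prop}
    (h : ∀ C : Finset (Fin n), C.Nonempty → ∃ i ∈ C, good C i) :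
    ∃ π : Perm (Fin n), ∀ i, good (suffixSet π i) i := by
  obtain ⟨π, hπ⟩ := exists_perm_good_of_lt h n le_rfl
  exact ⟨π, fun i => hπ i (π i).isLt⟩

end Peeling

theorem exists_mem_not_gain_of_strongCCE {n : ℕ} {S : Fin n → Type*} [∀ j, Fintype (S j)]
    {u : Fin n → (∀ j, S j) → ℝ} {D : (∀ j, S j) → ℝ} (sstar : ∀ j, S j)
    (hSCCE : ∀ C : Finset (Fin n), C.Nonempty →
      ∀ Dt : (∀ j, S j) → ℝ, (∀ t, 0 ≤ Dt t) → (∑ t, Dt t = 1) →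
      ∃ i ∈ C, ∑ s, D s * u i s ≥ ∑ s, ∑ t, D s * Dt t * u i (dev s t C))
    (C : Finset (Fin n)) (hC : C.Nonempty) :
    ∃ i ∈ C, ∑ s, D s * u i (dev s sstar C) ≤ ∑ s, D s * u i s := by
  classical
  obtain ⟨i, hiC, hi⟩ := hSCCE C hC (fun t => if t = sstar then 1 else 0)
    (fun t => by positivity) (by simp)
  exact ⟨i, hiC, by simpa using hi⟩

theorem lam_mul_le_one_add_mul_expected_welfare {ι X : Type*} [Fintype ι] [Fintype X]
    {u : ι → X → ℝ} {D : X → ℝ} {lam mu OPT : ℝ} (d : ι → X → X)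
    (hD0 : ∀ s, 0 ≤ D s) (hD1 : ∑ s, D s = 1)
    (hsmooth : ∀ s, lam * OPT - mu * ∑ i, u i s ≤ ∑ i, u i (d i s))
    (hdev : ∀ i, ∑ s, D s * u i (d i s) ≤ ∑ s, D s * u i s) :
    lam * OPT ≤ (1 + mu) * ∑ s, D s * ∑ i, u i s := by
  have hsum_dev : ∑ s, D s * ∑ i, u i (d i s) ≤ ∑ s, D s * ∑ i, u i s := by
    simp only [mul_sum]
    rw [sum_comm, sum_comm (f := fun s i => D s * u i s)]
    exact sum_le_sum fun i _ => hdev i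
  have hsmooth_exp : lam * OPT - mu * ∑ s, D s * ∑ i, u i s ≤ ∑ s, D s * ∑ i, u i (d i s) :=
    calc lam * OPT - mu * ∑ s, D s * ∑ i, u i s
        = ∑ s, D s * (lam * OPT - mu * ∑ i, u i s) := by
          simp only [mul_sub, sum_sub_distrib, mul_left_comm _ mu, ← mul_sum, ← sum_mul, hD1,
            one_mul]
      _ ≤ _ := sum_le_sum fun s _ => mul_le_mul_of_nonneg_left (hsmooth s) (hD0 s)
  linarith

theorem strong_cce_welfare_general {n : ℕ} {S : Fin n → Type*}
    [∀ j, Fintype (S j)]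
    (u : ∀ _ : Fin n, (∀ j, S j) → ℝ)
    (lam mu OPT : ℝ) (hmu : 0 ≤ mu)
    (sstar : ∀ j, S j)
    (hsmooth : ∀ (s : ∀ j, S j) (π : Equiv.Perm (Fin n)),
      ∑ i, u i (dev s sstar (suffixSet π i)) ≥ lam * OPT - mu * ∑ i, u i s)
    (D : (∀ j, S j) → ℝ) (hD0 : ∀ s, 0 ≤ D s) (hD1 : ∑ s, D s = 1)
    (hSCCE : ∀ C : Finset (Fin n), C.Nonempty →
      ∀ Dt : (∀ j, S j) → ℝ, (∀ t, 0 ≤ Dt t) → (∑ t, Dt t = 1) →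
      ∃ i ∈ C, ∑ s, D s * u i s ≥ ∑ s, ∑ t, D s * Dt t * u i (dev s t C)) :
    ∑ s, D s * ∑ i, u i s ≥ lam / (1 + mu) * OPT := by
  obtain ⟨π, hπ⟩ :=
    exists_perm_forall_good_suffixSet (exists_mem_not_gain_of_strongCCE sstar hSCCE)
  have hwelfare := lam_mul_le_one_add_mul_expected_welfare (fun i s => dev s sstar (suffixSet π i))
    hD0 hD1 (fun s => hsmooth s π) hπ
  rw [ge_iff_le, div_mul_eq_mul_div, div_le_iff₀ (by linarith)]
  linarith

/-- in a (λ,μ)-coalitionally smooth utility game, every strong coarse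
correlated equilibrium `D` has expected social welfare at least λ/(1+μ) of the optimal. -/
theorem strong_cce_welfare {n : ℕ} {S : Fin n → Type*}
    [∀ j, Fintype (S j)] [∀ j, DecidableEq (S j)]
    (u : ∀ _ : Fin n, (∀ j, S j) → ℝ)
    (hu : ∀ i s, 0 ≤ u i s)
    (lam mu OPT : ℝ) (hlam : 0 ≤ lam) (hmu : 0 ≤ mu)
    (hOPT_ub : ∀ s : ∀ j, S j, ∑ i, u i s ≤ OPT)
    (hOPT_ach : ∃ s : ∀ j, S j, ∑ i, u i s = OPT)
    (sstar : ∀ j, S j)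
    (hsmooth : ∀ (s : ∀ j, S j) (π : Equiv.Perm (Fin n)),
      ∑ i, u i (dev s sstar (suffixSet π i)) ≥ lam * OPT - mu * ∑ i, u i s)
    (D : (∀ j, S j) → ℝ) (hD0 : ∀ s, 0 ≤ D s) (hD1 : ∑ s, D s = 1)
    (hSCCE : ∀ C : Finset (Fin n), C.Nonempty →
      ∀ Dt : (∀ j, S j) → ℝ, (∀ t, 0 ≤ Dt t) → (∑ t, Dt t = 1) →
      ∃ i ∈ C, ∑ s, D s * u i s ≥ ∑ s, ∑ t, D s * Dt t * u i (dev s t C)) :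
    ∑ s, D s * ∑ i, u i s ≥ lam / (1 + mu) * OPT :=
  strong_cce_welfare_general u lam mu OPT hmu sstar hsmooth D hD0 hD1 hSCCE
end

section
/- Any monotone utility maximization game in which each player's utility is always at least a γ-fraction of his marginal contribution to the social welfare, i.e. u_i(s) ≥ γ·(SW(s) − SW(s_i^out, s_{-i})) for all i and s, is (γ,γ)-coalitionally smooth. -/
/-!
Order the players by `π` and move from `s*` to `s` one player at a time, the player at position
`k` switching back from `s*_i` to `s_i` at step `k`. Before its switch, player `i` faces exactly
the profile `(s*_{N_{π(i)}}, s_{-N_{π(i)}})`. Opting out from there is the same as opting out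
after the switch, so by monotonicity the welfare lost by the switch is at most player `i`'s
marginal contribution, and `γ` times it is at most `u_i`. Summing over the players, the welfare
losses telescope to `SW(s*) - SW(s)`.
-/

open Finset

open Function

theorem Equiv.Perm.sum_sub_apply_succ {M : Type*} [AddCommGroup M] {n : ℕ}
    (π : Equiv.Perm (Fin n)) (G : ℕ → M) :
    ∑ i, (G (π i) - G (π i + 1)) = G 0 - G n := by
  rw [Equiv.sum_comp π (fun k : Fin n => G k - G (k + 1)),
    Fin.sum_univ_eq_sum_range (fun k => G k - G (k + 1)), sum_range_sub']

theorem mul_sub_update_le_of_marginal {ι : Type*} [DecidableEq ι] {S : ι → Type*}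
    (W v : (∀ j, S j) → ℝ) {γ : ℝ} (hγ : 0 ≤ γ) (i : ι) (o : S i)
    (hmono : ∀ p, W (update p i o) ≤ W p)
    (hmarg : ∀ p, γ * (W p - W (update p i o)) ≤ v p)
    (p : ∀ j, S j) (a : S i) :
    γ * (W p - W (update p i a)) ≤ v p := by
  have hloss : W p - W (update p i a) ≤ W p - W (update p i o) := by
    have := hmono (update p i a)
    rw [update_idem] at this
    linarith
  exact (mul_le_mul_of_nonneg_left hloss hγ).trans (hmarg p)

section Hybrid

variable {n : ℕ} {S : Fin n → Type*}

def hybrid (π : Equiv.Perm (Fin n)) (s t : ∀ j, S j) (k : ℕ) : ∀ j, S j :=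
  fun j => if k ≤ (π j : ℕ) then t j else s j

variable (π : Equiv.Perm (Fin n)) (s t : ∀ j, S j)

theorem hybrid_zero : hybrid π s t 0 = t := by
  funext j
  simp [hybrid]

theorem hybrid_card : hybrid π s t n = s := by
  funext j
  simp [hybrid, (π j).isLt]

theorem dev_suffixSet (i : Fin n) : dev s t (suffixSet π i) = hybrid π s t (π i) := by
  funext j
  simp [dev, suffixSet, hybrid]

theorem hybrid_apply_succ (i : Fin n) :
    hybrid π s t (π i + 1) = update (hybrid π s t (π i)) i (s i) := by
  funext j
  rcases eq_or_ne j i with rfl | hne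
  · simp [hybrid]
  · have hπ : (π j : ℕ) ≠ π i := fun h => hne (π.injective (Fin.ext h))
    simp only [update_of_ne hne, hybrid]
    congr 1
    exact propext (by omega)

end Hybrid

theorem marginal_contribution_smooth_general {n : ℕ} {S : Fin n → Type*}
    (u : ∀ _ : Fin n, (∀ j, S j) → ℝ)
    (gamma : ℝ) (hgamma : 0 ≤ gamma)
    (sout : ∀ j, S j)
    (hmono : ∀ (i : Fin n) (s : ∀ j, S j),
      ∑ j, u j (Function.update s i (sout i)) ≤ ∑ j, u j s)
    (hmarg : ∀ (i : Fin n) (s : ∀ j, S j),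
      u i s ≥ gamma * (∑ j, u j s - ∑ j, u j (Function.update s i (sout i))))
    (sstar : ∀ j, S j) :
    ∀ (s : ∀ j, S j) (π : Equiv.Perm (Fin n)),
      ∑ i, u i (dev s sstar (suffixSet π i)) ≥
        gamma * (∑ i, u i sstar) - gamma * (∑ i, u i s) := by
  intro s π
  let W : (∀ j, S j) → ℝ := fun p => ∑ j, u j p
  have hstep : ∀ i, gamma * (W (hybrid π s sstar (π i)) - W (hybrid π s sstar (π i + 1))) ≤
      u i (dev s sstar (suffixSet π i)) := by
    intro i
    rw [dev_suffixSet, hybrid_apply_succ]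
    exact mul_sub_update_le_of_marginal W (u i) hgamma i (sout i) (hmono i) (hmarg i) _ _
  calc gamma * W sstar - gamma * W s
      = ∑ i, gamma * (W (hybrid π s sstar (π i)) - W (hybrid π s sstar (π i + 1))) := by
        rw [← mul_sum, π.sum_sub_apply_succ fun k => W (hybrid π s sstar k), hybrid_zero,
          hybrid_card, mul_sub]
    _ ≤ _ := sum_le_sum fun i _ => hstep i

/-- any monotone utility-maximization game in which every player's
utility is at least a γ-fraction of his marginal contribution to the welfare is
(γ,γ)-coalitionally smooth. -/
theorem marginal_contribution_smooth {n : ℕ} {S : Fin n → Type*}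
    (u : ∀ _ : Fin n, (∀ j, S j) → ℝ)
    (hu : ∀ i s, 0 ≤ u i s)
    (gamma : ℝ) (hgamma : 0 ≤ gamma)
    (sout : ∀ j, S j)
    (hmono : ∀ (i : Fin n) (s : ∀ j, S j),
      ∑ j, u j (Function.update s i (sout i)) ≤ ∑ j, u j s)
    (hmarg : ∀ (i : Fin n) (s : ∀ j, S j),
      u i s ≥ gamma * (∑ j, u j s - ∑ j, u j (Function.update s i (sout i))))
    (sstar : ∀ j, S j)
    (hstar : ∀ s : ∀ j, S j, ∑ i, u i s ≤ ∑ i, u i sstar) :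
    ∀ (s : ∀ j, S j) (π : Equiv.Perm (Fin n)),
      ∑ i, u i (dev s sstar (suffixSet π i)) ≥
        gamma * (∑ i, u i sstar) - gamma * (∑ i, u i s) :=
  marginal_contribution_smooth_general u gamma hgamma sout hmono hmarg sstar
end

section
/- In any monotone utility maximization game where each player's utility is at least his marginal contribution to the social welfare (u_i(s) ≥ SW(s) − SW(s_i^out, s_{-i}) for all i, s), every strong Nash equilibrium achieves social welfare at least half of the optimum. -/
open Finset

/-!
Let the players of a coalition `C` deviate from the strong Nash equilibrium `s` to a profile `t`.
Stability gives a player `i ∈ C` whose equilibrium utility is at least his utility after the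
deviation, which is at least his marginal contribution there; by monotonicity that contribution
dominates the welfare gained by adding `i` to the coalition `C \ {i}`. Inductively, the welfare
gained by the deviation of `C` is at most `∑ i ∈ C, u i s`, and for the grand coalition deviating
to an optimum `s*` this reads `SW(s*) - SW(s) ≤ SW(s)`.
-/

namespace Finset

variable {ι : Type*} [DecidableEq ι] {π : ι → Type*}

theorem update_piecewise_erase (C : Finset ι) (f g : ∀ j, π j) (i : ι) (v : π i) :
    Function.update ((C.erase i).piecewise f g) i v = Function.update (C.piecewise f g) i v := by
  ext j
  rcases eq_or_ne j i with rfl | hj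
  · simp
  · simp [piecewise, hj]

end Finset

section MarginalContribution

variable {ι : Type*} [Fintype ι] [DecidableEq ι] {S : ι → Type*}
  {u : ι → (∀ j, S j) → ℝ} {sout : ∀ j, S j}

theorem sum_piecewise_sub_sum_piecewise_erase_le
    (hmono : ∀ i s, ∑ j, u j (Function.update s i (sout i)) ≤ ∑ j, u j s)
    (hmarg : ∀ i s, u i s ≥ ∑ j, u j s - ∑ j, u j (Function.update s i (sout i)))
    (s t : ∀ j, S j) (C : Finset ι) (i : ι) :
    ∑ j, u j (C.piecewise t s) - ∑ j, u j ((C.erase i).piecewise t s) ≤ u i (C.piecewise t s) :=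
  calc ∑ j, u j (C.piecewise t s) - ∑ j, u j ((C.erase i).piecewise t s)
      ≤ ∑ j, u j (C.piecewise t s)
          - ∑ j, u j (Function.update ((C.erase i).piecewise t s) i (sout i)) := by
        linarith [hmono i ((C.erase i).piecewise t s)]
    _ ≤ u i (C.piecewise t s) := by
        rw [update_piecewise_erase]
        exact hmarg i _

theorem sum_piecewise_sub_sum_le_sum
    (hmono : ∀ i s, ∑ j, u j (Function.update s i (sout i)) ≤ ∑ j, u j s)
    (hmarg : ∀ i s, u i s ≥ ∑ j, u j s - ∑ j, u j (Function.update s i (sout i)))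
    {s t : ∀ j, S j} (hstable : ∀ C : Finset ι, C.Nonempty → ∃ i ∈ C, u i (C.piecewise t s) ≤ u i s)
    (C : Finset ι) :
    ∑ j, u j (C.piecewise t s) - ∑ j, u j s ≤ ∑ i ∈ C, u i s := by
  induction C using Finset.strongInduction with
  | H C ih =>
    rcases C.eq_empty_or_nonempty with rfl | hC
    · simp
    obtain ⟨i, hiC, hi⟩ := hstable C hC
    have hgain := sum_piecewise_sub_sum_piecewise_erase_le hmono hmarg s t C i
    have hrest := ih (C.erase i) (erase_ssubset hiC)
    rw [← add_sum_erase C _ hiC]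
    linarith

end MarginalContribution

theorem marginal_contribution_spoa_general {n : ℕ} {S : Fin n → Type*}
    (u : ∀ _ : Fin n, (∀ j, S j) → ℝ)
    (sout : ∀ j, S j)
    (hmono : ∀ (i : Fin n) (s : ∀ j, S j),
      ∑ j, u j (Function.update s i (sout i)) ≤ ∑ j, u j s)
    (hmarg : ∀ (i : Fin n) (s : ∀ j, S j),
      u i s ≥ ∑ j, u j s - ∑ j, u j (Function.update s i (sout i)))
    (sstar : ∀ j, S j)
    (s : ∀ j, S j)
    (hSNE : ∀ C : Finset (Fin n), C.Nonempty → ∀ sC : ∀ j, S j,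
      ∃ i ∈ C, u i s ≥ u i (dev s sC C)) :
    ∑ i, u i s ≥ (∑ i, u i sstar) / 2 := by
  -- `dev s t C` is `C.piecewise t s` by unfolding.
  have hgain := sum_piecewise_sub_sum_le_sum hmono hmarg (fun C hC => hSNE C hC sstar) univ
  rw [piecewise_univ] at hgain
  linarith

/-- in any monotone utility game where each player's utility is at least
his marginal contribution to the welfare, every strong Nash equilibrium achieves at
least half of the optimal social welfare. -/
theorem marginal_contribution_spoa {n : ℕ} {S : Fin n → Type*}
    (u : ∀ _ : Fin n, (∀ j, S j) → ℝ)
    (hu : ∀ i s, 0 ≤ u i s)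
    (sout : ∀ j, S j)
    (hmono : ∀ (i : Fin n) (s : ∀ j, S j),
      ∑ j, u j (Function.update s i (sout i)) ≤ ∑ j, u j s)
    (hmarg : ∀ (i : Fin n) (s : ∀ j, S j),
      u i s ≥ ∑ j, u j s - ∑ j, u j (Function.update s i (sout i)))
    (sstar : ∀ j, S j)
    (hstar : ∀ s : ∀ j, S j, ∑ i, u i s ≤ ∑ i, u i sstar)
    (s : ∀ j, S j)
    (hSNE : ∀ C : Finset (Fin n), C.Nonempty → ∀ sC : ∀ j, S j,
      ∃ i ∈ C, u i s ≥ u i (dev s sC C)) :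
    ∑ i, u i s ≥ (∑ i, u i sstar) / 2 :=
  marginal_contribution_spoa_general u sout hmono hmarg sstar s hSNE
end

section
/- A utility-maximization exact potential game with only positive externalities whose potential satisfies Φ(s) ≥ λ·SW(s) for all s, and with Φ(s^out) = 0, is (λ,0)-coalitionally smooth. -/
/-
The opt-out strategy turns every utility into a potential difference:
u_i(s) = Φ(s) − Φ(s with i opting out). Let the players join s* one at a time in the order
given by π, starting from the all-out profile: along this chain the utilities of the joining
players telescope to Φ(s*) − Φ(s^out) = Φ(s*) ≥ λ·SW(s*). Player i, at the moment it joins,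
faces the coalition deviation of its suffix except that everyone before it opts out instead of
playing s; by positive externalities this can only lower its utility.
-/

open Finset

section

variable {n : ℕ} {S : Fin n → Type*}

lemma dev_empty (s t : ∀ i, S i) : dev s t ∅ = s :=
  funext fun _ => if_neg (notMem_empty _)

lemma dev_insert (s t : ∀ i, S i) (C : Finset (Fin n)) (a : Fin n) :
    dev s t (insert a C) = Function.update (dev s t C) a (t a) := by
  funext j
  rcases eq_or_ne j a with rfl | hja
  · simp [dev]
  · simp [dev, hja]

lemma dev_dev_compl (s t r : ∀ i, S i) (C : Finset (Fin n)) :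
    dev (dev s t C) r Cᶜ = dev r t C := by
  funext j
  by_cases hj : j ∈ C <;> simp [dev, hj]

lemma utility_eq_potential_sub_optOut (u : Fin n → (∀ j, S j) → ℝ) (Φ : (∀ j, S j) → ℝ)
    (hpot : ∀ (i : Fin n) (s : ∀ j, S j) (si : S i),
      u i (Function.update s i si) - u i s = Φ (Function.update s i si) - Φ s)
    (sout : ∀ j, S j) (hout : ∀ (i : Fin n) (s : ∀ j, S j), u i (Function.update s i (sout i)) = 0)
    (i : Fin n) (s : ∀ j, S j) :
    u i s = Φ s - Φ (Function.update s i (sout i)) := by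
  simpa [hout] using hpot i (Function.update s i (sout i)) (s i)

lemma utility_dev_optOut_le (u : Fin n → (∀ j, S j) → ℝ) (sout : ∀ j, S j)
    (hext : ∀ (s : ∀ j, S j) (i j : Fin n), i ≠ j →
      u i (Function.update s j (sout j)) ≤ u i s)
    (s : ∀ j, S j) {D : Finset (Fin n)} {i : Fin n} (hi : i ∉ D) :
    u i (dev s sout D) ≤ u i s := by
  induction D using Finset.induction_on with
  | empty => rw [dev_empty]
  | insert a D _ ih =>
    rw [Finset.mem_insert, not_or] at hi
    rw [dev_insert]
    exact (hext _ i a hi.1).trans (ih hi.2)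

lemma utility_dev_optOut_le_dev (u : Fin n → (∀ j, S j) → ℝ) (sout : ∀ j, S j)
    (hext : ∀ (s : ∀ j, S j) (i j : Fin n), i ≠ j →
      u i (Function.update s j (sout j)) ≤ u i s)
    (s t : ∀ j, S j) {C : Finset (Fin n)} {i : Fin n} (hi : i ∈ C) :
    u i (dev sout t C) ≤ u i (dev s t C) := by
  rw [← dev_dev_compl s t sout C]
  exact utility_dev_optOut_le u sout hext _ (by simpa using hi)

def joinProfile (π : Equiv.Perm (Fin n)) (sout t : ∀ j, S j) (k : ℕ) : ∀ j, S j :=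
  dev sout t (univ.filter fun j => k ≤ (π j : ℕ))

lemma joinProfile_zero (π : Equiv.Perm (Fin n)) (sout t : ∀ j, S j) :
    joinProfile π sout t 0 = t := by
  funext j
  simp [joinProfile, dev]

lemma joinProfile_self (π : Equiv.Perm (Fin n)) (sout t : ∀ j, S j) :
    joinProfile π sout t n = sout := by
  funext j
  simp [joinProfile, dev, (π j).isLt]

lemma joinProfile_succ (π : Equiv.Perm (Fin n)) (sout t : ∀ j, S j) (k : Fin n) :
    joinProfile π sout t (k + 1) =
      Function.update (joinProfile π sout t k) (π.symm k) (sout (π.symm k)) := by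
  funext j
  rcases eq_or_ne j (π.symm k) with rfl | hj
  · simp [joinProfile, dev]
  · have hk : (π j : ℕ) ≠ k := fun h => hj (π.eq_symm_apply.mpr (Fin.ext h))
    simp only [joinProfile, dev, Function.update_of_ne hj, mem_filter, mem_univ, true_and]
    congr 1
    exact propext (by omega)

lemma dev_suffixSet_eq_joinProfile (π : Equiv.Perm (Fin n)) (sout t : ∀ j, S j) (i : Fin n) :
    dev sout t (suffixSet π i) = joinProfile π sout t (π i) := by
  simp only [joinProfile, suffixSet, Fin.le_iff_val_le_val]

lemma sum_utility_dev_suffixSet_optOut (u : Fin n → (∀ j, S j) → ℝ) (Φ : (∀ j, S j) → ℝ)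
    (hpot : ∀ (i : Fin n) (s : ∀ j, S j) (si : S i),
      u i (Function.update s i si) - u i s = Φ (Function.update s i si) - Φ s)
    (sout : ∀ j, S j) (hout : ∀ (i : Fin n) (s : ∀ j, S j), u i (Function.update s i (sout i)) = 0)
    (π : Equiv.Perm (Fin n)) (t : ∀ j, S j) :
    ∑ i, u i (dev sout t (suffixSet π i)) = Φ t - Φ sout := by
  have hstep (k : Fin n) : u (π.symm k) (joinProfile π sout t k) =
      Φ (joinProfile π sout t k) - Φ (joinProfile π sout t (k + 1)) := by
    rw [utility_eq_potential_sub_optOut u Φ hpot sout hout, joinProfile_succ]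
  calc ∑ i, u i (dev sout t (suffixSet π i))
      = ∑ i, u (π.symm (π i)) (joinProfile π sout t (π i)) := by
        simp only [dev_suffixSet_eq_joinProfile, Equiv.symm_apply_apply]
    _ = ∑ k : Fin n, (Φ (joinProfile π sout t k) - Φ (joinProfile π sout t (k + 1))) := by
        rw [Equiv.sum_comp π fun k => u (π.symm k) (joinProfile π sout t k)]
        exact sum_congr rfl fun k _ => hstep k
    _ = Φ (joinProfile π sout t 0) - Φ (joinProfile π sout t n) := by
        rw [Fin.sum_univ_eq_sum_range fun k => Φ (joinProfile π sout t k) -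
          Φ (joinProfile π sout t (k + 1)), sum_range_sub']
    _ = Φ t - Φ sout := by rw [joinProfile_zero, joinProfile_self]

end

theorem positive_externalities_smooth_utility_general {n : ℕ} {S : Fin n → Type*}
    (u : ∀ _ : Fin n, (∀ j, S j) → ℝ)
    (Φ : (∀ j, S j) → ℝ)
    (hpot : ∀ (i : Fin n) (s : ∀ j, S j) (si : S i),
      u i (Function.update s i si) - u i s = Φ (Function.update s i si) - Φ s)
    (sout : ∀ j, S j)
    (hout : ∀ (i : Fin n) (s : ∀ j, S j), u i (Function.update s i (sout i)) = 0)
    (hΦout : Φ sout = 0)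
    (hext : ∀ (s : ∀ j, S j) (i j : Fin n), i ≠ j →
      u i (Function.update s j (sout j)) ≤ u i s)
    (lam : ℝ)
    (hclose : ∀ s : ∀ j, S j, lam * (∑ i, u i s) ≤ Φ s)
    (sstar : ∀ j, S j) :
    ∀ (s : ∀ j, S j) (π : Equiv.Perm (Fin n)),
      ∑ i, u i (dev s sstar (suffixSet π i)) ≥ lam * (∑ i, u i sstar) := by
  intro s π
  calc lam * ∑ i, u i sstar
      ≤ Φ sstar := hclose sstar
    _ = ∑ i, u i (dev sout sstar (suffixSet π i)) := by
        rw [sum_utility_dev_suffixSet_optOut u Φ hpot sout hout, hΦout, sub_zero]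
    _ ≤ ∑ i, u i (dev s sstar (suffixSet π i)) := sum_le_sum fun i _ =>
        utility_dev_optOut_le_dev u sout hext s sstar (by simp [suffixSet])

/-- a utility-maximization exact potential game with only positive
externalities, opt-out strategies of zero utility, Φ(s^out) = 0, and Φ(s) ≥ λ·SW(s)
is (λ,0)-coalitionally smooth. -/
theorem positive_externalities_smooth_utility {n : ℕ} {S : Fin n → Type*}
    (u : ∀ _ : Fin n, (∀ j, S j) → ℝ)
    (hu : ∀ i s, 0 ≤ u i s)
    (Φ : (∀ j, S j) → ℝ)
    (hpot : ∀ (i : Fin n) (s : ∀ j, S j) (si : S i),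
      u i (Function.update s i si) - u i s = Φ (Function.update s i si) - Φ s)
    (sout : ∀ j, S j)
    (hout : ∀ (i : Fin n) (s : ∀ j, S j), u i (Function.update s i (sout i)) = 0)
    (hΦout : Φ sout = 0)
    (hext : ∀ (s : ∀ j, S j) (i j : Fin n), i ≠ j →
      u i (Function.update s j (sout j)) ≤ u i s)
    (lam : ℝ) (hlam : 0 ≤ lam)
    (hclose : ∀ s : ∀ j, S j, lam * (∑ i, u i s) ≤ Φ s)
    (sstar : ∀ j, S j)
    (hstar : ∀ s : ∀ j, S j, ∑ i, u i s ≤ ∑ i, u i sstar) :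
    ∀ (s : ∀ j, S j) (π : Equiv.Perm (Fin n)),
      ∑ i, u i (dev s sstar (suffixSet π i)) ≥ lam * (∑ i, u i sstar) :=
  positive_externalities_smooth_utility_general u Φ hpot sout hout hΦout hext lam hclose sstar
end

section
/- A cost-minimization exact potential game with only positive externalities, opt-out strategies of zero cost with Φ(s^out) = 0, and potential satisfying Φ(s) ≤ λ·SC(s) for all s, is (λ,0)-coalitionally smooth, i.e. for every profile s and permutation π of players, Σ_i c_i(s*_{N_{π(i)}}, s_{-N_{π(i)}}) ≤ λ·SC(s*), where s* is a socially optimal profile. -/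
open Finset

/-!
Fix `π` and let `w k` (`rankedFrom π s* s^out k`) be the profile in which the players of rank
`π j ≥ k` play `s*` and all others have opted out. Player `i`'s cost in
`(s*_{N_{π(i)}}, s_{-N_{π(i)}})` is at most its cost in `w (π i)`, because `w (π i)` arises from
that profile by opting out players other than `i`. Since opting out is free, the exact potential
turns `c_i (w (π i))` into `Φ (w (π i)) - Φ (w (π i + 1))`, and summing over `i` telescopes to
`Φ s* - Φ s^out = Φ s* ≤ λ · SC(s*)`.
-/

section OptOut

variable {ι : Type*} [DecidableEq ι] {S : ι → Type*}

theorem le_piecewise_of_le_update {β : Type*} [Preorder β] (f : (∀ j, S j) → β)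
    (o : ∀ j, S j) {i : ι} (hf : ∀ s j, j ≠ i → f s ≤ f (Function.update s j (o j)))
    {T : Finset ι} (hi : i ∉ T) (u : ∀ j, S j) : f u ≤ f (T.piecewise o u) := by
  induction T using Finset.induction_on with
  | empty => simp
  | insert a T ha ih =>
    rw [piecewise_insert]
    exact (ih (fun h => hi (mem_insert_of_mem h))).trans
      (hf _ a fun h => hi (h ▸ mem_insert_self a T))

theorem cost_eq_sub_potential_update_optOut (c : ι → (∀ j, S j) → ℝ) (Φ : (∀ j, S j) → ℝ)
    (hpot : ∀ i s (si : S i),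
      c i (Function.update s i si) - c i s = Φ (Function.update s i si) - Φ s)
    (o : ∀ j, S j) (hout : ∀ i s, c i (Function.update s i (o i)) = 0) (i : ι) (s : ∀ j, S j) :
    c i s = Φ s - Φ (Function.update s i (o i)) := by
  linarith [hpot i s (o i), hout i s]

end OptOut

section Ranking

variable {n : ℕ} {S : Fin n → Type*}

def rankedFrom (π : Equiv.Perm (Fin n)) (t o : ∀ j, S j) (k : ℕ) : ∀ j, S j :=
  fun j => if k ≤ (π j : ℕ) then t j else o j

variable (π : Equiv.Perm (Fin n)) (t o : ∀ j, S j)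

theorem rankedFrom_zero : rankedFrom π t o 0 = t := by
  funext j; simp [rankedFrom]

theorem rankedFrom_of_le {k : ℕ} (hk : n ≤ k) : rankedFrom π t o k = o := by
  funext j; simp [rankedFrom, (π j).is_lt.trans_le hk]

theorem rankedFrom_succ (i : Fin n) :
    rankedFrom π t o (π i + 1) = Function.update (rankedFrom π t o (π i)) i (o i) := by
  funext j
  rcases eq_or_ne j i with rfl | hj
  · simp [rankedFrom]
  · have hne : (π j : ℕ) ≠ π i := fun h => hj (π.injective (Fin.ext h))
    simp only [rankedFrom, Function.update_of_ne hj]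
    split_ifs <;> first | rfl | omega

theorem piecewise_dev_suffixSet (s : ∀ j, S j) (i : Fin n) :
    (univ.filter fun j => π j < π i).piecewise o (dev s t (suffixSet π i)) =
      rankedFrom π t o (π i) := by
  funext j
  simp only [Finset.piecewise, dev, suffixSet, rankedFrom, mem_filter, mem_univ, true_and,
    Fin.le_def, Fin.lt_def]
  split_ifs <;> first | rfl | omega

theorem sum_sub_rankedFrom_succ {β : Type*} [AddCommGroup β] (Φ : (∀ j, S j) → β) :
    ∑ i, (Φ (rankedFrom π t o (π i)) - Φ (rankedFrom π t o (π i + 1))) = Φ t - Φ o := by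
  rw [Equiv.sum_comp π (fun k : Fin n => Φ (rankedFrom π t o k) - Φ (rankedFrom π t o (k + 1))),
    Fin.sum_univ_eq_sum_range (fun k => Φ (rankedFrom π t o k) - Φ (rankedFrom π t o (k + 1))),
    sum_range_sub', rankedFrom_zero, rankedFrom_of_le π t o le_rfl]

end Ranking

theorem positive_externalities_smooth_cost_general {n : ℕ} {S : Fin n → Type*}
    (c : ∀ _ : Fin n, (∀ j, S j) → ℝ)
    (Φ : (∀ j, S j) → ℝ)
    (hpot : ∀ (i : Fin n) (s : ∀ j, S j) (si : S i),
      c i (Function.update s i si) - c i s = Φ (Function.update s i si) - Φ s)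
    (sout : ∀ j, S j)
    (hout : ∀ (i : Fin n) (s : ∀ j, S j), c i (Function.update s i (sout i)) = 0)
    (hΦout : Φ sout = 0)
    (hext : ∀ (s : ∀ j, S j) (i j : Fin n), i ≠ j →
      c i s ≤ c i (Function.update s j (sout j)))
    (lam : ℝ)
    (hclose : ∀ s : ∀ j, S j, Φ s ≤ lam * (∑ i, c i s))
    (sstar : ∀ j, S j) :
    ∀ (s : ∀ j, S j) (π : Equiv.Perm (Fin n)),
      ∑ i, c i (dev s sstar (suffixSet π i)) ≤ lam * (∑ i, c i sstar) := by
  intro s π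
  have hdev : ∀ i, c i (dev s sstar (suffixSet π i)) ≤ c i (rankedFrom π sstar sout (π i)) := by
    intro i
    rw [← piecewise_dev_suffixSet π sstar sout s i]
    exact le_piecewise_of_le_update (c i) sout (fun s' j hj => hext s' i j hj.symm) (by simp) _
  calc ∑ i, c i (dev s sstar (suffixSet π i))
      ≤ ∑ i, c i (rankedFrom π sstar sout (π i)) := sum_le_sum fun i _ => hdev i
    _ = ∑ i, (Φ (rankedFrom π sstar sout (π i)) -
        Φ (rankedFrom π sstar sout (π i + 1))) := sum_congr rfl fun i _ => by
        rw [rankedFrom_succ, cost_eq_sub_potential_update_optOut c Φ hpot sout hout]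
    _ = Φ sstar := by rw [sum_sub_rankedFrom_succ, hΦout, sub_zero]
    _ ≤ lam * ∑ i, c i sstar := hclose sstar

/-- a cost-minimization exact potential game with only positive
externalities, opt-out strategies of zero cost, Φ(s^out) = 0, and Φ(s) ≤ λ·SC(s)
is (λ,0)-coalitionally smooth. -/
theorem positive_externalities_smooth_cost {n : ℕ} {S : Fin n → Type*}
    (c : ∀ _ : Fin n, (∀ j, S j) → ℝ)
    (hc : ∀ i s, 0 ≤ c i s)
    (Φ : (∀ j, S j) → ℝ)
    (hpot : ∀ (i : Fin n) (s : ∀ j, S j) (si : S i),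
      c i (Function.update s i si) - c i s = Φ (Function.update s i si) - Φ s)
    (sout : ∀ j, S j)
    (hout : ∀ (i : Fin n) (s : ∀ j, S j), c i (Function.update s i (sout i)) = 0)
    (hΦout : Φ sout = 0)
    (hext : ∀ (s : ∀ j, S j) (i j : Fin n), i ≠ j →
      c i s ≤ c i (Function.update s j (sout j)))
    (lam : ℝ) (hlam : 0 ≤ lam)
    (hclose : ∀ s : ∀ j, S j, Φ s ≤ lam * (∑ i, c i s))
    (sstar : ∀ j, S j)
    (hstar : ∀ s : ∀ j, S j, ∑ i, c i sstar ≤ ∑ i, c i s) :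
    ∀ (s : ∀ j, S j) (π : Equiv.Perm (Fin n)),
      ∑ i, c i (dev s sstar (suffixSet π i)) ≤ lam * (∑ i, c i sstar) :=
  positive_externalities_smooth_cost_general c Φ hpot sout hout hΦout hext lam hclose sstar
end

section
/- Fair cost-sharing games with n players are (H_n, 0)-coalitionally smooth: for the socially optimal profile s*, any profile s, and any ordering of the players, Σ_{i=1}^n c_i(s*_{N_i}, s_{-N_i}) ≤ H_n · SC(s*), where H_n = Σ_{k=1}^n 1/k. -/
/-!
Fix the profile `s*` and a resource `r`, and let `T` be the set of players using `r`
in `s*`. When player `i ∈ T` deviates, every later player of `T` in the ordering is already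
playing `s*`, so `r` is shared by at least `k_i` players, where `k_i` is the rank of `i` counted
from the end of `T`. These ranks are distinct numbers in `{1, …, n}`, so the shares of `c_r` paid
by the deviating players sum to at most `H_n · c_r`; summing over the resources used by `s*`
gives `H_n · SC(s*)`.
-/

open Finset

/-- Number of players using resource `r` under profile `s`. -/
def congestion {n : ℕ} {R : Type*} [Fintype R] [DecidableEq R] (s : Fin n → Finset R) (r : R) : ℕ :=
  (Finset.univ.filter fun i => r ∈ s i).card

/-- Fair-sharing cost of player `i`. -/
noncomputable def shareCost {n : ℕ} {R : Type*} [Fintype R] [DecidableEq R] (c : R → ℝ) (s : Fin n → Finset R)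
    (i : Fin n) : ℝ :=
  ∑ r ∈ s i, c r / (congestion s r : ℝ)

lemma sum_one_div_le_harmonic_of_injOn {ι : Type*} {n : ℕ} {T : Finset ι} {f : ι → ℕ}
    (hf : Set.InjOn f T) (hf_mem : ∀ i ∈ T, f i ∈ Icc 1 n) :
    ∑ i ∈ T, 1 / (f i : ℝ) ≤ ∑ k ∈ range n, 1 / ((k : ℝ) + 1) := by
  rw [← sum_image (f := fun k : ℕ => 1 / (k : ℝ)) hf]
  calc ∑ k ∈ T.image f, 1 / (k : ℝ)
      ≤ ∑ k ∈ Icc 1 n, 1 / (k : ℝ) :=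
        sum_le_sum_of_subset_of_nonneg (by simpa [subset_iff] using hf_mem)
          fun _ _ _ => by positivity
    _ = ∑ k ∈ range n, 1 / ((k : ℝ) + 1) := by
        rw [← Ico_add_one_right_eq_Icc, sum_Ico_eq_sum_range]
        simp [add_comm]

lemma injOn_card_filter_le {ι α : Type*} [LinearOrder α] {key : ι → α} {T : Finset ι}
    (hkey : Set.InjOn key T) :
    Set.InjOn (fun i => #(T.filter fun j => key i ≤ key j)) T := by
  have card_lt : ∀ a ∈ T, ∀ b, key a < key b →
      #(T.filter fun j => key b ≤ key j) < #(T.filter fun j => key a ≤ key j) := fun a ha b hab =>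
    card_lt_card <| (ssubset_iff_of_subset <| monotone_filter_right T fun _ _ => hab.le.trans).2
      ⟨a, by simp [ha], by simp [hab]⟩
  intro a ha b hb hcard
  by_contra hne
  rcases lt_or_gt_of_ne (hkey.ne ha hb hne) with hab | hba
  · exact (card_lt a ha b hab).ne' hcard
  · exact (card_lt b hb a hba).ne hcard

lemma sum_one_div_card_filter_le_harmonic {ι α : Type*} [LinearOrder α] {key : ι → α}
    {T : Finset ι} {n : ℕ} (hkey : Set.InjOn key T) (hT : #T ≤ n) :
    ∑ i ∈ T, 1 / (#(T.filter fun j => key i ≤ key j) : ℝ) ≤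
      ∑ k ∈ range n, 1 / ((k : ℝ) + 1) :=
  sum_one_div_le_harmonic_of_injOn (injOn_card_filter_le hkey) fun i hi =>
    mem_Icc.2 ⟨card_pos.2 ⟨i, by simp [hi]⟩, (card_filter_le _ _).trans hT⟩

lemma sum_sum_mem_eq_sum_sum_filter_mem {ι R M : Type*} [Fintype ι] [Fintype R]
    [DecidableEq R] [AddCommMonoid M] (t : ι → Finset R) (f : ι → R → M) :
    ∑ i, ∑ r ∈ t i, f i r = ∑ r, ∑ i ∈ univ.filter (r ∈ t ·), f i r :=
  sum_comm' fun _ _ => by simp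

section CostSharing

variable {n : ℕ} {R : Type*} [Fintype R] [DecidableEq R]

lemma sum_shareCost_eq_sum_used (c : R → ℝ) (t : Fin n → Finset R) :
    ∑ i, shareCost c t i = ∑ r ∈ univ.filter (0 < congestion t ·), c r := by
  rw [sum_filter]
  simp only [shareCost]
  rw [sum_sum_mem_eq_sum_sum_filter_mem t fun _ r => c r / (congestion t r : ℝ)]
  refine sum_congr rfl fun r _ => ?_
  rw [sum_const, nsmul_eq_mul]
  change (congestion t r : ℝ) * _ = _
  split_ifs with h
  · field_simp
  · simp [Nat.eq_zero_of_not_pos h]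

lemma card_filter_suffix_le_congestion_dev (s t : Fin n → Finset R) (π : Equiv.Perm (Fin n))
    (i : Fin n) (r : R) :
    #((univ.filter (r ∈ t ·)).filter fun j => π i ≤ π j) ≤
      congestion (dev s t (suffixSet π i)) r :=
  card_le_card fun j hj => by
    simp only [mem_filter, mem_univ, true_and] at hj
    simp [dev, suffixSet, hj]

lemma shareCost_dev_suffixSet_le {c : R → ℝ} (hc : ∀ r, 0 ≤ c r) (s t : Fin n → Finset R)
    (π : Equiv.Perm (Fin n)) (i : Fin n) :
    shareCost c (dev s t (suffixSet π i)) i ≤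
      ∑ r ∈ t i, c r / #((univ.filter (r ∈ t ·)).filter fun j => π i ≤ π j) := by
  have hself : dev s t (suffixSet π i) i = t i := by simp [dev, suffixSet]
  rw [shareCost, hself]
  refine sum_le_sum fun r hr => div_le_div_of_nonneg_left (hc r) ?_ ?_
  · exact_mod_cast card_pos.2 ⟨i, by simp [hr]⟩
  · exact_mod_cast card_filter_suffix_le_congestion_dev s t π i r

end CostSharing

theorem cost_sharing_Hn_smooth_general {n : ℕ} {R : Type*} [Fintype R] [DecidableEq R]
    (c : R → ℝ) (hc : ∀ r, 0 ≤ c r)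
    (Strat : Fin n → Set (Finset R))
    (sstar : Fin n → Finset R) :
    ∀ (s : Fin n → Finset R), (∀ i, s i ∈ Strat i) →
      ∀ π : Equiv.Perm (Fin n),
        ∑ i, shareCost c (dev s sstar (suffixSet π i)) i ≤
          (∑ k ∈ Finset.range n, 1 / ((k : ℝ) + 1)) * ∑ i, shareCost c sstar i := by
  intro s _ π
  set H := ∑ k ∈ range n, 1 / ((k : ℝ) + 1)
  set T : R → Finset (Fin n) := fun r => univ.filter (r ∈ sstar ·)
  calc ∑ i, shareCost c (dev s sstar (suffixSet π i)) i
      ≤ ∑ i, ∑ r ∈ sstar i, c r / #((T r).filter fun j => π i ≤ π j) :=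
        sum_le_sum fun i _ => shareCost_dev_suffixSet_le hc s sstar π i
    _ = ∑ r, c r * ∑ i ∈ T r, 1 / (#((T r).filter fun j => π i ≤ π j) : ℝ) := by
        rw [sum_sum_mem_eq_sum_sum_filter_mem]
        simp only [T, mul_sum, mul_one_div]
    _ = ∑ r ∈ univ.filter (0 < congestion sstar ·),
          c r * ∑ i ∈ T r, 1 / (#((T r).filter fun j => π i ≤ π j) : ℝ) := by
        refine (sum_filter_of_ne fun r _ hr => card_pos.2 ?_).symm
        exact nonempty_of_sum_ne_zero (right_ne_zero_of_mul hr)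
    _ ≤ ∑ r ∈ univ.filter (0 < congestion sstar ·), c r * H :=
        sum_le_sum fun r _ => mul_le_mul_of_nonneg_left
          (sum_one_div_card_filter_le_harmonic π.injective.injOn
            ((card_le_univ _).trans_eq (Fintype.card_fin n))) (hc r)
    _ = H * ∑ i, shareCost c sstar i := by
        rw [sum_shareCost_eq_sum_used, ← sum_mul, mul_comm]

/-- fair cost-sharing games are (H_n, 0)-coalitionally smooth. -/
theorem cost_sharing_Hn_smooth {n : ℕ} {R : Type*} [Fintype R] [DecidableEq R]
    (c : R → ℝ) (hc : ∀ r, 0 ≤ c r)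
    (Strat : Fin n → Set (Finset R))
    (sstar : Fin n → Finset R) (hsstarS : ∀ i, sstar i ∈ Strat i)
    (hopt : ∀ t : Fin n → Finset R, (∀ i, t i ∈ Strat i) →
      ∑ i, shareCost c sstar i ≤ ∑ i, shareCost c t i) :
    ∀ (s : Fin n → Finset R), (∀ i, s i ∈ Strat i) →
      ∀ π : Equiv.Perm (Fin n),
        ∑ i, shareCost c (dev s sstar (suffixSet π i)) i ≤
          (∑ k ∈ Finset.range n, 1 / ((k : ℝ) + 1)) * ∑ i, shareCost c sstar i :=
  cost_sharing_Hn_smooth_general c hc Strat sstar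
end

section
/- If a utility maximization game with nonnegative utilities is (λ,μ)-coalitionally smooth, then for the coalitional best-response Markov chain, for any current profile s, the expected social welfare after one step satisfies E[SW(s^t) | s^{t−1} = s] ≥ (1/H_n)·(λ·OPT − μ·SW(s)). Consequently, any stationary distribution D of the chain satisfies E_{s∼D}[SW(s)] ≥ (1/H_n)·(λ/(1+μ))·OPT. -/
/-!
For a fixed profile `s`, average the smoothness inequality over all `n!` orderings `π`.
For `i ∈ C` with `#C = k`, exactly `(k-1)!(n-k)! = n!/(k·C(n,k))` orderings have `N_{π(i)} = C`,
so the average of `∑ᵢ uᵢ(s*_{N_{π(i)}}, s)` is `∑_C (1/(k·C(n,k))) ∑_{i∈C} uᵢ(s*_C, s)`; since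
`br C s` beats `s*_C` for the coalition `C`, this is at most `H_n` times the expected welfare
after one step. Averaging the one-step bound against a stationary `D` gives, for its mean welfare
`E`, `E ≥ (λ·OPT − μ·E)/H_n`, and `H_n ≥ 1` turns this into `E ≥ λ·OPT/(H_n(1 + μ))`.
-/

open Finset

open Equiv
open scoped Nat

lemma Equiv.Perm.exists_apply_eq_and_map_eq {α : Type*} [DecidableEq α] {i i' : α}
    {C C' : Finset α} (hi : i ∈ C) (hi' : i' ∈ C') (hC : #C = #C') :
    ∃ τ : Perm α, τ i = i' ∧ C.map τ.toEmbedding = C' := by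
  obtain ⟨σ, rfl⟩ := Perm.exists_map_finset_eq C C' hC
  refine ⟨swap (σ i) i' * σ, by simp, eq_of_subset_of_card_le (fun j hj => ?_) (by simp)⟩
  obtain ⟨x, hx, rfl⟩ := mem_map.1 hj
  have hσx : σ x ∈ C.map σ.toEmbedding := mem_map_of_mem _ hx
  have hσi : σ i ∈ C.map σ.toEmbedding := mem_map_of_mem _ hi
  simp only [Equiv.coe_toEmbedding, Perm.coe_mul, Function.comp_apply, swap_apply_def]
  split_ifs <;> assumption

variable {n : ℕ}

lemma mem_suffixSet_self (π : Perm (Fin n)) (i : Fin n) : i ∈ suffixSet π i := by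
  simp [suffixSet]

lemma suffixSet_mul_inv_apply (π τ : Perm (Fin n)) (i : Fin n) :
    suffixSet (π * τ⁻¹) (τ i) = (suffixSet π i).map τ.toEmbedding := by
  ext j
  simp [suffixSet, Perm.inv_def]

lemma card_suffixSet (π : Perm (Fin n)) (i : Fin n) : #(suffixSet π i) = n - π i := by
  have : suffixSet π i = (Ici (π i)).map π.symm.toEmbedding := by
    ext j
    simp [suffixSet]
  simp [this]

lemma card_filter_card_suffixSet_eq_one (π : Perm (Fin n)) {k : ℕ} (hk : 1 ≤ k) (hkn : k ≤ n) :
    #{i | #(suffixSet π i) = k} = 1 := by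
  rw [card_eq_one]
  refine ⟨π.symm ⟨n - k, by omega⟩, ?_⟩
  ext i
  simp only [card_suffixSet, mem_filter, mem_univ, true_and, mem_singleton, Equiv.eq_symm_apply,
    Fin.ext_iff]
  omega

def permsWithSuffix (i : Fin n) (C : Finset (Fin n)) : Finset (Perm (Fin n)) :=
  {π | suffixSet π i = C}

lemma permsWithSuffix_eq_empty {i : Fin n} {C : Finset (Fin n)} (hi : i ∉ C) :
    permsWithSuffix i C = ∅ :=
  filter_eq_empty_iff.2 fun π _ hπ => hi (hπ ▸ mem_suffixSet_self π i)

lemma card_permsWithSuffix_congr {i i' : Fin n} {C C' : Finset (Fin n)} (hi : i ∈ C)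
    (hi' : i' ∈ C') (hC : #C = #C') :
    #(permsWithSuffix i C) = #(permsWithSuffix i' C') := by
  obtain ⟨τ, rfl, rfl⟩ := Perm.exists_apply_eq_and_map_eq hi hi' hC
  refine card_equiv (Equiv.mulRight τ⁻¹) fun π => ?_
  simp [permsWithSuffix, suffixSet_mul_inv_apply]

/-- Each ordering `π` is counted once, for the player `i` with `π i = n - k`. -/
lemma sum_sum_card_permsWithSuffix {k : ℕ} (hk : 1 ≤ k) (hkn : k ≤ n) :
    ∑ C : Finset (Fin n) with #C = k, ∑ i ∈ C, #(permsWithSuffix i C) = n ! := by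
  calc ∑ C : Finset (Fin n) with #C = k, ∑ i ∈ C, #(permsWithSuffix i C)
      = ∑ C : Finset (Fin n) with #C = k, ∑ i, #(permsWithSuffix i C) := by
        refine sum_congr rfl fun C _ => sum_subset (subset_univ C) fun i _ hi => ?_
        rw [permsWithSuffix_eq_empty hi, card_empty]
    _ = ∑ π : Perm (Fin n), #{i | #(suffixSet π i) = k} := by
        simp only [permsWithSuffix, card_filter]
        rw [sum_comm, sum_comm (s := (univ : Finset (Perm (Fin n))))]
        refine sum_congr rfl fun i _ => ?_
        rw [sum_comm]
        refine sum_congr rfl fun π _ => ?_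
        rw [sum_ite_eq]
        simp
    _ = n ! := by simp [card_filter_card_suffixSet_eq_one _ hk hkn, Fintype.card_perm]

lemma card_permsWithSuffix_mul {i : Fin n} {C : Finset (Fin n)} (hi : i ∈ C) :
    #(permsWithSuffix i C) * (#C * n.choose #C) = n ! := by
  have hC : 1 ≤ #C := card_pos.2 ⟨i, hi⟩
  have hCn : #C ≤ n := by simpa using card_le_univ C
  rw [← sum_sum_card_permsWithSuffix hC hCn]
  calc #(permsWithSuffix i C) * (#C * n.choose #C)
      = ∑ C' : Finset (Fin n) with #C' = #C, ∑ _i' ∈ C', #(permsWithSuffix i C) := by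
        rw [sum_congr rfl fun C' hC' => by rw [sum_const, smul_eq_mul, (mem_filter.1 hC').2],
          sum_const, smul_eq_mul, univ_filter_card_eq, card_powersetCard, card_univ,
          Fintype.card_fin]
        ring
    _ = _ := sum_congr rfl fun C' hC' => sum_congr rfl fun i' hi' =>
        card_permsWithSuffix_congr hi hi' (mem_filter.1 hC').2.symm

/-- One step of the chain picks `C` with probability `coalitionWeight C / H_n`. The empty
coalition gets weight `0` through `1 / 0 = 0`. -/
noncomputable def coalitionWeight (C : Finset (Fin n)) : ℝ :=
  1 / (#C : ℝ) * (1 / (n.choose #C : ℝ))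

lemma coalitionWeight_nonneg (C : Finset (Fin n)) : 0 ≤ coalitionWeight C := by
  unfold coalitionWeight; positivity

lemma card_permsWithSuffix_eq {i : Fin n} {C : Finset (Fin n)} (hi : i ∈ C) :
    (#(permsWithSuffix i C) : ℝ) = n ! * coalitionWeight C := by
  have hC : 0 < #C := card_pos.2 ⟨i, hi⟩
  have hchoose : 0 < n.choose #C := Nat.choose_pos (by simpa using card_le_univ C)
  have := card_permsWithSuffix_mul hi
  rw [coalitionWeight, ← this]
  push_cast
  field_simp

lemma sum_perm_sum_suffixSet (F : Fin n → Finset (Fin n) → ℝ) :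
    ∑ π : Perm (Fin n), ∑ i, F i (suffixSet π i)
      = n ! * ∑ C, coalitionWeight C * ∑ i ∈ C, F i C := by
  calc ∑ π : Perm (Fin n), ∑ i, F i (suffixSet π i)
      = ∑ i, ∑ C, #(permsWithSuffix i C) * F i C := by
        rw [sum_comm]
        refine sum_congr rfl fun i _ => ?_
        rw [← sum_fiberwise univ (fun π => suffixSet π i)]
        refine sum_congr rfl fun C _ => ?_
        rw [sum_congr rfl fun π hπ => by rw [(mem_filter.1 hπ).2], sum_const, nsmul_eq_mul]
        rfl
    _ = ∑ C, ∑ i ∈ C, #(permsWithSuffix i C) * F i C := by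
        rw [sum_comm]
        refine sum_congr rfl fun C _ => (sum_subset (subset_univ C) fun i _ hi => ?_).symm
        simp [permsWithSuffix_eq_empty hi]
    _ = n ! * ∑ C, coalitionWeight C * ∑ i ∈ C, F i C := by
        simp only [mul_sum]
        refine sum_congr rfl fun C _ => sum_congr rfl fun i hi => ?_
        rw [card_permsWithSuffix_eq hi]
        ring

lemma sum_Icc_eq_sum_coalitionWeight_mul (G : Finset (Fin n) → ℝ) :
    ∑ k ∈ Icc 1 n, 1 / (k : ℝ) * (1 / (n.choose k : ℝ)) * ∑ C : Finset (Fin n) with #C = k, G C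
      = ∑ C, coalitionWeight C * G C := by
  have hcard : ∀ C ∈ (univ : Finset (Finset (Fin n))), #C ∈ range (n + 1) := fun C _ =>
    mem_range_succ_iff.2 (by simpa using card_le_univ C)
  calc _ = ∑ k ∈ range (n + 1),
          1 / (k : ℝ) * (1 / (n.choose k : ℝ)) * ∑ C : Finset (Fin n) with #C = k, G C := by
        refine sum_subset (fun k hk => by simp at hk ⊢; omega) fun k hk hk' => ?_
        obtain rfl : k = 0 := by simp at hk hk'; omega
        simp
    _ = ∑ k ∈ range (n + 1), ∑ C : Finset (Fin n) with #C = k, coalitionWeight C * G C := by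
        refine sum_congr rfl fun k _ => ?_
        rw [mul_sum]
        refine sum_congr rfl fun C hC => ?_
        rw [coalitionWeight, (mem_filter.1 hC).2]
    _ = _ := sum_fiberwise_of_maps_to hcard _

lemma le_sum_coalitionWeight_mul_of_le_sum_suffixSet (F : Fin n → Finset (Fin n) → ℝ) {W : ℝ}
    (hF : ∀ π : Perm (Fin n), W ≤ ∑ i, F i (suffixSet π i)) :
    W ≤ ∑ C, coalitionWeight C * ∑ i ∈ C, F i C := by
  have hsum : n ! * W ≤ n ! * ∑ C, coalitionWeight C * ∑ i ∈ C, F i C := by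
    rw [← sum_perm_sum_suffixSet]
    simpa [Fintype.card_perm] using sum_le_sum fun π (_ : π ∈ univ) => hF π
  exact le_of_mul_le_mul_left hsum (by positivity)

lemma le_sum_coalitionWeight_mul_welfare_br {S : Fin n → Type*} (u : Fin n → (∀ j, S j) → ℝ)
    (hu : ∀ i s, 0 ≤ u i s) (s sstar : ∀ j, S j) (br : Finset (Fin n) → (∀ j, S j) → ∀ j, S j)
    (hbr : ∀ C, ∑ i ∈ C, u i (dev s sstar C) ≤ ∑ i ∈ C, u i (br C s)) {W : ℝ}
    (hsmooth : ∀ π : Perm (Fin n), W ≤ ∑ i, u i (dev s sstar (suffixSet π i))) :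
    W ≤ ∑ C, coalitionWeight C * ∑ i, u i (br C s) := by
  refine (le_sum_coalitionWeight_mul_of_le_sum_suffixSet (fun i C => u i (dev s sstar C))
    hsmooth).trans (sum_le_sum fun C _ => mul_le_mul_of_nonneg_left ?_ (coalitionWeight_nonneg C))
  exact (hbr C).trans (sum_le_sum_of_subset_of_nonneg (subset_univ C) fun i _ _ => hu i _)

lemma sum_card_filter_and_mul {β α : Type*} [Fintype β] [Fintype α] [DecidableEq α]
    (p : β → Prop) [DecidablePred p] (f : β → α) (g : α → ℝ) :
    ∑ t, (#{b | p b ∧ f b = t} : ℝ) * g t = ∑ b with p b, g (f b) := by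
  rw [← sum_fiberwise _ f]
  refine sum_congr rfl fun t _ => ?_
  rw [filter_filter, sum_congr rfl fun b hb => by rw [(mem_filter.1 hb).2.2], sum_const,
    nsmul_eq_mul]

lemma le_sum_mul_of_stationary {α : Type*} [Fintype α] (P : α → α → ℝ) {D : α → ℝ}
    (hD0 : ∀ s, 0 ≤ D s) (hD1 : ∑ s, D s = 1) (hstat : ∀ t, D t = ∑ s, D s * P s t)
    {f : α → ℝ} (hf : ∀ s, 0 ≤ f s) {h c μ : ℝ} (hμ : 0 ≤ μ) (hh : h ≤ 1)
    (hdrift : ∀ s, h * (c - μ * f s) ≤ ∑ t, P s t * f t) :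
    h * c / (1 + μ) ≤ ∑ s, D s * f s := by
  set E := ∑ s, D s * f s
  have hE : 0 ≤ E := sum_nonneg fun s _ => mul_nonneg (hD0 s) (hf s)
  have hmean : h * (c - μ * E) ≤ E :=
    calc h * (c - μ * E) = ∑ s, D s * (h * (c - μ * f s)) := by
          simp only [E, mul_sub, mul_sum, sum_sub_distrib, ← sum_mul, hD1, one_mul]
          congr 1
          exact sum_congr rfl fun s _ => by ring
      _ ≤ ∑ s, D s * ∑ t, P s t * f t :=
          sum_le_sum fun s _ => mul_le_mul_of_nonneg_left (hdrift s) (hD0 s)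
      _ = E := by
          simp only [E, mul_sum]
          rw [sum_comm]
          refine sum_congr rfl fun t _ => ?_
          rw [hstat t, sum_mul]
          exact sum_congr rfl fun s _ => by ring
  rw [div_le_iff₀ (by linarith)]
  nlinarith [mul_nonneg (mul_nonneg hE hμ) (sub_nonneg.2 hh)]

lemma one_div_sum_range_le_one (n : ℕ) : 1 / ∑ k ∈ range n, 1 / ((k : ℝ) + 1) ≤ 1 := by
  cases n with
  | zero => simp
  | succ m =>
    refine div_le_one_of_le₀ ?_ (by positivity)
    rw [sum_range_succ']
    norm_num
    positivity

lemma sum_transition_mul {β α : Type*} [Fintype β] [Fintype α] [DecidableEq α] (κ : β → ℕ)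
    (f : β → α) (h : ℝ) (K : Finset ℕ) (a : ℕ → ℝ) (g : α → ℝ) :
    ∑ t, (h * ∑ k ∈ K, a k * (#{b | κ b = k ∧ f b = t} : ℝ)) * g t
      = h * ∑ k ∈ K, a k * ∑ b with κ b = k, g (f b) := by
  simp only [← sum_card_filter_and_mul, mul_sum, sum_mul]
  rw [sum_comm]
  exact sum_congr rfl fun k _ => sum_congr rfl fun t _ => by ring

theorem coalitional_sink_equilibrium_welfare_general {n : ℕ} {S : Fin n → Type*}
    [∀ j, Fintype (S j)] [∀ j, DecidableEq (S j)]
    (u : ∀ _ : Fin n, (∀ j, S j) → ℝ)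
    (hu : ∀ i s, 0 ≤ u i s)
    (lam mu OPT : ℝ) (hmu : 0 ≤ mu)
    (sstar : ∀ j, S j)
    (hsmooth : ∀ (s : ∀ j, S j) (π : Equiv.Perm (Fin n)),
      ∑ i, u i (dev s sstar (suffixSet π i)) ≥ lam * OPT - mu * ∑ i, u i s)
    -- coalitional best responses: `br C s` agrees with `s` outside `C` and maximizes
    -- the total utility of the coalition `C`
    (br : Finset (Fin n) → (∀ j, S j) → (∀ j, S j))
    (hbr_opt : ∀ (C : Finset (Fin n)) (s t : ∀ j, S j),
      ∑ i ∈ C, u i (dev s t C) ≤ ∑ i ∈ C, u i (br C s))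
    (Hn : ℝ) (hHn : Hn = ∑ k ∈ Finset.range n, 1 / ((k : ℝ) + 1))
    -- a stationary distribution of the coalitional best-response Markov chain
    (D : (∀ j, S j) → ℝ) (hD0 : ∀ s, 0 ≤ D s) (hD1 : ∑ s, D s = 1)
    (hstat : ∀ t : ∀ j, S j, D t = ∑ s, D s *
      ((1 / Hn) * ∑ k ∈ Finset.Icc 1 n, (1 / (k : ℝ)) * (1 / (n.choose k : ℝ)) *
        ((Finset.univ.filter fun C : Finset (Fin n) => C.card = k ∧ br C s = t).card : ℝ))) :
    (∀ s : ∀ j, S j,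
      (1 / Hn) * ∑ k ∈ Finset.Icc 1 n, (1 / (k : ℝ)) * (1 / (n.choose k : ℝ)) *
        ∑ C ∈ Finset.univ.filter (fun C : Finset (Fin n) => C.card = k),
          ∑ i, u i (br C s)
      ≥ (1 / Hn) * (lam * OPT - mu * ∑ i, u i s)) ∧
    ∑ s, D s * ∑ i, u i s ≥ (1 / Hn) * (lam / (1 + mu)) * OPT := by
  have hHn_nonneg : 0 ≤ 1 / Hn := one_div_nonneg.2 (hHn ▸ sum_nonneg fun k _ => by positivity)
  have one_step : ∀ s : ∀ j, S j,
      (1 / Hn) * (lam * OPT - mu * ∑ i, u i s) ≤ (1 / Hn) * ∑ k ∈ Icc 1 n,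
        1 / (k : ℝ) * (1 / (n.choose k : ℝ)) *
          ∑ C : Finset (Fin n) with #C = k, ∑ i, u i (br C s) := by
    intro s
    rw [sum_Icc_eq_sum_coalitionWeight_mul fun C => ∑ i, u i (br C s)]
    exact mul_le_mul_of_nonneg_left (le_sum_coalitionWeight_mul_welfare_br u hu s sstar br
      (fun C => hbr_opt C s sstar) (hsmooth s)) hHn_nonneg
  refine ⟨one_step, ?_⟩
  have hHn_le : 1 / Hn ≤ 1 := hHn ▸ one_div_sum_range_le_one n
  have drift : ∀ s : ∀ j, S j, 1 / Hn * (lam * OPT - mu * ∑ i, u i s) ≤ ∑ t,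
      (1 / Hn * ∑ k ∈ Icc 1 n, 1 / (k : ℝ) * (1 / (n.choose k : ℝ)) *
        (#{C : Finset (Fin n) | #C = k ∧ br C s = t} : ℝ)) * ∑ i, u i t := fun s => by
    rw [sum_transition_mul card (br · s)]
    exact one_step s
  have hmean := le_sum_mul_of_stationary _ hD0 hD1 hstat (f := fun s => ∑ i, u i s)
    (fun s => sum_nonneg fun i _ => hu i s) hmu hHn_le drift
  rw [ge_iff_le]
  convert hmean using 1
  ring

/-- for a (λ,μ)-coalitionally smooth utility game, one step of the
coalitional best-response Markov chain from any profile `s` has expected welfare at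
least (1/H_n)(λ·OPT − μ·SW(s)); hence every stationary distribution (coalitional sink
equilibrium) has expected welfare at least (1/H_n)(λ/(1+μ))·OPT. -/
theorem coalitional_sink_equilibrium_welfare {n : ℕ} {S : Fin n → Type*}
    [∀ j, Fintype (S j)] [∀ j, DecidableEq (S j)]
    (u : ∀ _ : Fin n, (∀ j, S j) → ℝ)
    (hu : ∀ i s, 0 ≤ u i s)
    (lam mu OPT : ℝ) (hlam : 0 ≤ lam) (hmu : 0 ≤ mu)
    (hOPT_ub : ∀ s : ∀ j, S j, ∑ i, u i s ≤ OPT)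
    (hOPT_ach : ∃ s : ∀ j, S j, ∑ i, u i s = OPT)
    (sstar : ∀ j, S j)
    (hsmooth : ∀ (s : ∀ j, S j) (π : Equiv.Perm (Fin n)),
      ∑ i, u i (dev s sstar (suffixSet π i)) ≥ lam * OPT - mu * ∑ i, u i s)
    -- coalitional best responses: `br C s` agrees with `s` outside `C` and maximizes
    -- the total utility of the coalition `C`
    (br : Finset (Fin n) → (∀ j, S j) → (∀ j, S j))
    (hbr_fix : ∀ (C : Finset (Fin n)) (s : ∀ j, S j) (i : Fin n), i ∉ C → br C s i = s i)
    (hbr_opt : ∀ (C : Finset (Fin n)) (s t : ∀ j, S j),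
      ∑ i ∈ C, u i (dev s t C) ≤ ∑ i ∈ C, u i (br C s))
    (Hn : ℝ) (hHn : Hn = ∑ k ∈ Finset.range n, 1 / ((k : ℝ) + 1))
    -- a stationary distribution of the coalitional best-response Markov chain
    (D : (∀ j, S j) → ℝ) (hD0 : ∀ s, 0 ≤ D s) (hD1 : ∑ s, D s = 1)
    (hstat : ∀ t : ∀ j, S j, D t = ∑ s, D s *
      ((1 / Hn) * ∑ k ∈ Finset.Icc 1 n, (1 / (k : ℝ)) * (1 / (n.choose k : ℝ)) *
        ((Finset.univ.filter fun C : Finset (Fin n) => C.card = k ∧ br C s = t).card : ℝ))) :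
    (∀ s : ∀ j, S j,
      (1 / Hn) * ∑ k ∈ Finset.Icc 1 n, (1 / (k : ℝ)) * (1 / (n.choose k : ℝ)) *
        ∑ C ∈ Finset.univ.filter (fun C : Finset (Fin n) => C.card = k),
          ∑ i, u i (br C s)
      ≥ (1 / Hn) * (lam * OPT - mu * ∑ i, u i s)) ∧
    ∑ s, D s * ∑ i, u i s ≥ (1 / Hn) * (lam / (1 + mu)) * OPT :=
  coalitional_sink_equilibrium_welfare_general u hu lam mu OPT hmu sstar hsmooth br hbr_opt Hn hHn D
    hD0 hD1 hstat
end

section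
/- Suppose a sequence of nonnegative reals W_0, W_1, …, W_T satisfies W_t ≥ (1/H_n)(λ·OPT − μ·W_{t−1}) for all t ≥ 1, where λ, μ, OPT ≥ 0. Then for each t ≥ 1, at least one of W_{t−1} and W_t is ≥ (λ/(H_n+μ))·OPT; hence the average (1/T)Σ_{t=0}^{T−1} W_t ≥ ((T−1)/(2T))·(λ/(H_n+μ))·OPT. -/
/-!
If `W (t-1)` is below the fixed point `a / (H + μ)` of the map `x ↦ (a - μ x) / H`, which is
antitone for `μ ≥ 0`, then the recurrence pushes `W t` above it. So among any two consecutive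
terms one reaches the fixed point, and as all terms are nonnegative each of the `T - 1`
adjacent pairs sums to at least that much; every term lies in at most two pairs.
-/

open Finset

lemma div_add_le_or_div_add_le_of_ge_inv_mul_sub {H μ a x y : ℝ} (hH : 0 < H) (hμ : 0 ≤ μ)
    (h : y ≥ (1 / H) * (a - μ * x)) : a / (H + μ) ≤ x ∨ a / (H + μ) ≤ y := by
  rcases le_or_gt (a / (H + μ)) x with hx | hx
  · exact Or.inl hx
  · have hfix : (1 / H) * (a - μ * (a / (H + μ))) = a / (H + μ) := by
      field_simp
      ring
    refine Or.inr ?_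
    calc a / (H + μ) = (1 / H) * (a - μ * (a / (H + μ))) := hfix.symm
      _ ≤ (1 / H) * (a - μ * x) := by gcongr
      _ ≤ y := h

lemma mul_le_two_mul_sum_range_of_le_add_succ {W : ℕ → ℝ} {c : ℝ} {m : ℕ}
    (hW : ∀ t ≤ m, 0 ≤ W t) (hpair : ∀ t < m, c ≤ W t + W (t + 1)) :
    m * c ≤ 2 * ∑ t ∈ range (m + 1), W t := by
  have hinit : ∑ t ∈ range m, W t ≤ ∑ t ∈ range (m + 1), W t := by
    rw [sum_range_succ]
    linarith [hW m le_rfl]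
  have htail : ∑ t ∈ range m, W (t + 1) ≤ ∑ t ∈ range (m + 1), W t := by
    rw [sum_range_succ']
    linarith [hW 0 (Nat.zero_le m)]
  calc (m : ℝ) * c = ∑ _t ∈ range m, c := by simp
    _ ≤ ∑ t ∈ range m, (W t + W (t + 1)) := sum_le_sum fun t ht => hpair t (mem_range.mp ht)
    _ = ∑ t ∈ range m, W t + ∑ t ∈ range m, W (t + 1) := sum_add_distrib
    _ ≤ 2 * ∑ t ∈ range (m + 1), W t := by linarith

theorem best_response_empirical_welfare_general (T n : ℕ) (hT : 1 ≤ T) (hn : 1 ≤ n)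
    (Hn : ℝ) (hHn : Hn = ∑ k ∈ Finset.range n, 1 / ((k : ℝ) + 1))
    (lam mu OPT : ℝ) (hmu : 0 ≤ mu)
    (W : ℕ → ℝ) (hW : ∀ t, t ≤ T → 0 ≤ W t)
    (hrec : ∀ t, 1 ≤ t → t ≤ T → W t ≥ (1 / Hn) * (lam * OPT - mu * W (t - 1))) :
    (∀ t, 1 ≤ t → t ≤ T →
      W (t - 1) ≥ lam / (Hn + mu) * OPT ∨ W t ≥ lam / (Hn + mu) * OPT) ∧
    (1 / (T : ℝ)) * ∑ t ∈ Finset.range T, W t ≥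
      ((T : ℝ) - 1) / (2 * T) * (lam / (Hn + mu)) * OPT := by
  have hHn_pos : 0 < Hn :=
    hHn ▸ sum_pos (fun k _ => by positivity) (nonempty_range_iff.mpr (by omega))
  have hstep : ∀ t, 1 ≤ t → t ≤ T →
      W (t - 1) ≥ lam / (Hn + mu) * OPT ∨ W t ≥ lam / (Hn + mu) * OPT := by
    intro t ht1 htT
    rw [div_mul_eq_mul_div]
    exact div_add_le_or_div_add_le_of_ge_inv_mul_sub hHn_pos hmu (hrec t ht1 htT)
  refine ⟨hstep, ?_⟩
  obtain ⟨m, rfl⟩ := Nat.exists_eq_add_of_le' hT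
  have hpair : ∀ t < m, lam / (Hn + mu) * OPT ≤ W t + W (t + 1) := fun t ht => by
    have h := hstep (t + 1) (by omega) (by omega)
    rw [Nat.add_sub_cancel] at h
    rcases h with h | h <;> linarith [hW t (by omega), hW (t + 1) (by omega)]
  have hsum := mul_le_two_mul_sum_range_of_le_add_succ (fun t ht => hW t (by omega)) hpair
  push_cast
  rw [ge_iff_le, add_sub_cancel_right]
  calc (m : ℝ) / (2 * (m + 1)) * (lam / (Hn + mu)) * OPT
        = m * (lam / (Hn + mu) * OPT) / (2 * (m + 1)) := by ring
    _ ≤ (2 * ∑ t ∈ range (m + 1), W t) / (2 * (m + 1)) := by gcongr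
    _ = 1 / (m + 1) * ∑ t ∈ range (m + 1), W t := by field_simp

/-- if W_t ≥ (1/H_n)(λ·OPT − μ·W_{t−1}) for 1 ≤ t ≤ T, then for each
such t one of W_{t−1}, W_t is at least (λ/(H_n+μ))·OPT, and the average welfare over
the first T steps is at least ((T−1)/(2T))·(λ/(H_n+μ))·OPT. -/
theorem best_response_empirical_welfare (T n : ℕ) (hT : 1 ≤ T) (hn : 1 ≤ n)
    (Hn : ℝ) (hHn : Hn = ∑ k ∈ Finset.range n, 1 / ((k : ℝ) + 1))
    (lam mu OPT : ℝ) (hlam : 0 ≤ lam) (hmu : 0 ≤ mu) (hOPT : 0 ≤ OPT)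
    (W : ℕ → ℝ) (hW : ∀ t, t ≤ T → 0 ≤ W t)
    (hrec : ∀ t, 1 ≤ t → t ≤ T → W t ≥ (1 / Hn) * (lam * OPT - mu * W (t - 1))) :
    (∀ t, 1 ≤ t → t ≤ T →
      W (t - 1) ≥ lam / (Hn + mu) * OPT ∨ W t ≥ lam / (Hn + mu) * OPT) ∧
    (1 / (T : ℝ)) * ∑ t ∈ Finset.range T, W t ≥
      ((T : ℝ) - 1) / (2 * T) * (lam / (Hn + mu)) * OPT :=
  best_response_empirical_welfare_general T n hT hn Hn hHn lam mu OPT hmu W hW hrec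
end

section
/- The Rosenthal potential Φ(s) = Σ_{r∈R} Σ_{t=1}^{n_r(s)} π_r(t) of a utility congestion game with nonnegative decreasing per-resource utility functions π_r is monotone and submodular as a function on multisets of strategies: Φ(s∪t) ≥ Φ(s) for all multisets s, t, and for multisets s ⊆ t and any strategy s_i, Φ(s_i ∪ s) − Φ(s) ≥ Φ(s_i ∪ t) − Φ(t). -/
/-! Adding a strategy `a` raises the congestion of each `r ∈ a` by one, so the potential gains
`∑ r ∈ a, p r (n_r + 1)`. Monotonicity follows from `p ≥ 0`; submodularity from `p r` being
antitone, since the congestions in `t ≥ s` are larger. -/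

open Finset

/-- Congestion of resource `r` in a multiset of strategies (subsets of `R`),
counted with multiplicity. -/
def msCongestion {R : Type*} [DecidableEq R] (s : Multiset (Finset R)) (r : R) : ℕ :=
  Multiset.card (s.filter fun t => r ∈ t)

/-- Rosenthal potential of a multiset of strategies. -/
def rosenthal {R : Type*} [Fintype R] [DecidableEq R] (p : R → ℕ → ℝ)
    (s : Multiset (Finset R)) : ℝ :=
  ∑ r : R, ∑ k ∈ Finset.range (msCongestion s r), p r (k + 1)

section

variable {R : Type*} [DecidableEq R]

lemma msCongestion_cons (a : Finset R) (s : Multiset (Finset R)) (r : R) :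
    msCongestion (a ::ₘ s) r = msCongestion s r + if r ∈ a then 1 else 0 := by
  by_cases h : r ∈ a <;> simp [msCongestion, h]

lemma msCongestion_mono {s t : Multiset (Finset R)} (h : s ≤ t) (r : R) :
    msCongestion s r ≤ msCongestion t r :=
  Multiset.card_le_card (Multiset.filter_le_filter _ h)

variable [Fintype R] {p : R → ℕ → ℝ}

lemma rosenthal_mono (hp : ∀ r k, 0 ≤ p r k) {s t : Multiset (Finset R)} (h : s ≤ t) :
    rosenthal p s ≤ rosenthal p t :=
  sum_le_sum fun r _ => sum_le_sum_of_subset_of_nonneg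
    (range_subset_range.2 (msCongestion_mono h r)) fun k _ _ => hp r (k + 1)

lemma rosenthal_cons_sub (p : R → ℕ → ℝ) (a : Finset R) (s : Multiset (Finset R)) :
    rosenthal p (a ::ₘ s) - rosenthal p s = ∑ r ∈ a, p r (msCongestion s r + 1) := by
  have gain (r : R) :
      ∑ k ∈ range (msCongestion (a ::ₘ s) r), p r (k + 1)
        - ∑ k ∈ range (msCongestion s r), p r (k + 1)
        = if r ∈ a then p r (msCongestion s r + 1) else 0 := by
    by_cases h : r ∈ a <;> simp [msCongestion_cons, h, sum_range_succ]
  rw [rosenthal, rosenthal, ← sum_sub_distrib, sum_congr rfl fun r _ => gain r, sum_ite_mem,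
    univ_inter]

lemma rosenthal_cons_sub_antitone (hp : ∀ r, Antitone (p r)) {s t : Multiset (Finset R)}
    (h : s ≤ t) (a : Finset R) :
    rosenthal p (a ::ₘ t) - rosenthal p t ≤ rosenthal p (a ::ₘ s) - rosenthal p s := by
  rw [rosenthal_cons_sub, rosenthal_cons_sub]
  exact sum_le_sum fun r _ => hp r (Nat.succ_le_succ (msCongestion_mono h r))

end

/-- the Rosenthal potential of a utility congestion game with
nonnegative decreasing resource utilities is monotone and submodular as a multiset
function. -/
theorem rosenthal_monotone_submodular {R : Type*} [Fintype R] [DecidableEq R]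
    (p : R → ℕ → ℝ)
    (hp0 : ∀ r k, 0 ≤ p r k)
    (hpdec : ∀ r, ∀ k l : ℕ, k ≤ l → p r l ≤ p r k) :
    (∀ s t : Multiset (Finset R), rosenthal p s ≤ rosenthal p (s + t)) ∧
    (∀ s t : Multiset (Finset R), s ≤ t → ∀ a : Finset R,
      rosenthal p (a ::ₘ t) - rosenthal p t ≤ rosenthal p (a ::ₘ s) - rosenthal p s) :=
  ⟨fun s t => rosenthal_mono hp0 (Multiset.le_add_right s t),
    fun _ _ h => rosenthal_cons_sub_antitone (fun r _ _ hkl => hpdec r _ _ hkl) h⟩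
end

section
/- In a utility congestion game with resource utilities π_r(k) = v_r/k (v_r ≥ 0), the Rosenthal potential and social welfare satisfy SW(s) ≤ Φ(s) ≤ H_n·SW(s) for every profile s of n players. -/
/-
Resources nobody uses contribute to neither side. A used resource `r` contributes `v_r` to the welfare
and `v_r · H_{n_r}` to the potential, and `1 ≤ n_r ≤ n` gives `v_r ≤ v_r · H_{n_r} ≤ H_n · v_r`.
-/

open Finset

theorem congestion_le {n : ℕ} {R : Type*} [Fintype R] [DecidableEq R] (s : Fin n → Finset R)
    (r : R) : congestion s r ≤ n :=
  (card_le_univ _).trans_eq (Fintype.card_fin n)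

theorem sum_filter_pos_sum_range {ι M : Type*} [AddCommMonoid M] (t : Finset ι) (m : ι → ℕ)
    (g : ι → ℕ → M) :
    ∑ i ∈ t.filter (fun i => 0 < m i), ∑ k ∈ range (m i), g i k =
      ∑ i ∈ t, ∑ k ∈ range (m i), g i k :=
  sum_filter_of_ne fun i _ hi => Nat.pos_of_ne_zero fun h => hi (by simp [h])

theorem le_sum_range_div_succ {a : ℝ} (ha : 0 ≤ a) {m : ℕ} (hm : 0 < m) :
    a ≤ ∑ k ∈ range m, a / ((k : ℝ) + 1) := by
  simpa using single_le_sum (f := fun k : ℕ => a / ((k : ℝ) + 1))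
    (fun k _ => by positivity) (mem_range.2 hm)

theorem sum_range_div_succ_le {a : ℝ} (ha : 0 ≤ a) {m n : ℕ} (hmn : m ≤ n) :
    ∑ k ∈ range m, a / ((k : ℝ) + 1) ≤ (∑ k ∈ range n, 1 / ((k : ℝ) + 1)) * a := by
  calc ∑ k ∈ range m, a / ((k : ℝ) + 1)
      = (∑ k ∈ range m, 1 / ((k : ℝ) + 1)) * a := by
        rw [sum_mul]
        exact sum_congr rfl fun k _ => by ring
    _ ≤ (∑ k ∈ range n, 1 / ((k : ℝ) + 1)) * a := by gcongr

/-- in a utility congestion game with π_r(k) = v_r/k, the Rosenthal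
potential and the social welfare satisfy SW(s) ≤ Φ(s) ≤ H_n·SW(s). -/
theorem fair_sharing_potential_close {n : ℕ} {R : Type*} [Fintype R] [DecidableEq R]
    (v : R → ℝ) (hv : ∀ r, 0 ≤ v r)
    (s : Fin n → Finset R) :
    (∑ r ∈ Finset.univ.filter (fun r : R => 0 < congestion s r), v r) ≤
      (∑ r : R, ∑ k ∈ Finset.range (congestion s r), v r / ((k : ℝ) + 1)) ∧
    (∑ r : R, ∑ k ∈ Finset.range (congestion s r), v r / ((k : ℝ) + 1)) ≤
      (∑ k ∈ Finset.range n, 1 / ((k : ℝ) + 1)) *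
        ∑ r ∈ Finset.univ.filter (fun r : R => 0 < congestion s r), v r := by
  rw [← sum_filter_pos_sum_range, mul_sum]
  exact ⟨sum_le_sum fun r hr => le_sum_range_div_succ (hv r) (mem_filter.1 hr).2,
    sum_le_sum fun r _ => sum_range_div_succ_le (hv r) (congestion_le s r)⟩
end

section
/- Let v : ℝ≥0^m → ℝ≥0 be monotone in each coordinate and satisfy the decreasing marginal contribution property within each skill group g of a partition 𝒢 of the m coordinates (holding coordinates outside g fixed). Then for every effort vector x, Σ_{k=1}^m ∂_k v(x) ≤ |𝒢| · v(x), where ∂_k v(x) = v(x) − v(0^k, x_{-k}) is player k's marginal contribution. -/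
open Finset

/-!
Order the players of one group and switch them off one at a time. By decreasing marginal
contributions inside the group, each player's marginal contribution at `x` is at most its
marginal contribution once the previously listed members are switched off, and the latter
telescope to `v x - v (x with the whole group switched off) ≤ v x`. Summing over the groups
gives the factor `g`.
-/

section Marginal

variable {ι : Type*} [DecidableEq ι]

def marginal (v : (ι → ℝ) → ℝ) (x : ι → ℝ) (k : ι) : ℝ :=
  v x - v (Function.update x k 0)

theorem sum_marginal_le_sub_piecewise (v : (ι → ℝ) → ℝ) (x : ι → ℝ) (s : Finset ι)
    (hdec : ∀ k ∈ s, ∀ t ⊆ s, k ∉ t → marginal v x k ≤ marginal v (t.piecewise 0 x) k) :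
    ∑ k ∈ s, marginal v x k ≤ v x - v (s.piecewise 0 x) := by
  induction s using Finset.induction_on with
  | empty => simp
  | insert k s hk ih =>
    have hstep : marginal v x k ≤ v (s.piecewise 0 x) - v ((insert k s).piecewise 0 x) := by
      rw [piecewise_insert]
      exact hdec k (mem_insert_self k s) s (subset_insert k s) hk
    have hrest := ih fun j hj t ht =>
      hdec j (mem_insert_of_mem hj) t (ht.trans (subset_insert k s))
    rw [sum_insert hk]
    linarith

variable {κ : Type*} [DecidableEq κ] [Fintype ι]

theorem sum_marginal_fiber_le (v : (ι → ℝ) → ℝ)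
    (hv0 : ∀ x : ι → ℝ, (∀ j, 0 ≤ x j) → 0 ≤ v x) (grp : ι → κ)
    (hdmc : ∀ (k : ι) (x y : ι → ℝ), (∀ j, 0 ≤ x j) → (∀ j, x j ≤ y j) →
      (∀ j, grp j ≠ grp k → x j = y j) → x k = y k →
      v y - v (Function.update y k 0) ≤ v x - v (Function.update x k 0))
    (x : ι → ℝ) (hx : ∀ j, 0 ≤ x j) (a : κ) :
    ∑ k ∈ univ.filter (grp · = a), marginal v x k ≤ v x := by
  set s := univ.filter (grp · = a)
  have hoff_mem (t : Finset ι) : t.piecewise (0 : ι → ℝ) x ∈ Set.Icc 0 x :=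
    t.piecewise_mem_Icc hx
  have hdec : ∀ k ∈ s, ∀ t ⊆ s, k ∉ t → marginal v x k ≤ marginal v (t.piecewise 0 x) k := by
    intro k hk t ht hkt
    refine hdmc k _ x (hoff_mem t).1 (hoff_mem t).2 (fun j hj => ?_) (piecewise_eq_of_notMem _ _ _ hkt)
    refine piecewise_eq_of_notMem _ _ _ fun hjt => hj ?_
    rw [(mem_filter.1 (ht hjt)).2, (mem_filter.1 hk).2]
  have hv_off := hv0 _ (hoff_mem s).1
  linarith [sum_marginal_le_sub_piecewise v x s hdec]

end Marginal

theorem sum_marginals_le_groups_mul_general {m g : ℕ}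
    (v : (Fin m → ℝ) → ℝ)
    (hv0 : ∀ x : Fin m → ℝ, (∀ j, 0 ≤ x j) → 0 ≤ v x)
    (grp : Fin m → Fin g)
    (hdmc : ∀ (k : Fin m) (x y : Fin m → ℝ), (∀ j, 0 ≤ x j) → (∀ j, x j ≤ y j) →
      (∀ j, grp j ≠ grp k → x j = y j) → x k = y k →
      v y - v (Function.update y k 0) ≤ v x - v (Function.update x k 0))
    (x : Fin m → ℝ) (hx : ∀ j, 0 ≤ x j) :
    ∑ k : Fin m, (v x - v (Function.update x k 0)) ≤ (g : ℝ) * v x :=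
  calc ∑ k : Fin m, marginal v x k
      = ∑ a : Fin g, ∑ k ∈ univ.filter (grp · = a), marginal v x k :=
        (sum_fiberwise univ grp _).symm
    _ ≤ ∑ _a : Fin g, v x := sum_le_sum fun a _ => sum_marginal_fiber_le v hv0 grp hdmc x hx a
    _ = g * v x := by simp

/-- if `v` is monotone and has decreasing marginal contributions within
each skill group of a partition of the coordinates into `g` groups, then the sum of
marginal contributions is at most `g · v(x)`. -/
theorem sum_marginals_le_groups_mul {m g : ℕ}
    (v : (Fin m → ℝ) → ℝ)
    (hv0 : ∀ x : Fin m → ℝ, (∀ j, 0 ≤ x j) → 0 ≤ v x)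
    (hmono : ∀ x y : Fin m → ℝ, (∀ j, 0 ≤ x j) → (∀ j, x j ≤ y j) → v x ≤ v y)
    (grp : Fin m → Fin g)
    (hdmc : ∀ (k : Fin m) (x y : Fin m → ℝ), (∀ j, 0 ≤ x j) → (∀ j, x j ≤ y j) →
      (∀ j, grp j ≠ grp k → x j = y j) → x k = y k →
      v y - v (Function.update y k 0) ≤ v x - v (Function.update x k 0))
    (x : Fin m → ℝ) (hx : ∀ j, 0 ≤ x j) :
    ∑ k : Fin m, (v x - v (Function.update x k 0)) ≤ (g : ℝ) * v x :=
  sum_marginals_le_groups_mul_general v hv0 grp hdmc x hx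
end

section
/- In the welfare sharing game with projects whose value functions satisfy the skill-group-wise decreasing marginal contribution property, each player's proportional utility share satisfies u_i(x) ≥ (1/max_j |𝒢_j|) · Σ_{j∈P_i} ∂_i v_j(x_j), i.e. each player receives at least a 1/max_j |𝒢_j| fraction of his marginal contribution to the welfare; hence the game is (γ,γ)-coalitionally smooth with γ = 1/max_j |𝒢_j|. -/
/-!
Within a project the value is split in proportion to marginal contributions, which are
nonnegative by monotonicity and sum to at most `|𝒢_j| · v_j`; so each participant receives at
least a `1 / |𝒢_j|` fraction of his marginal contribution. For smoothness, move the players from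
`sstar` to `x` one at a time in the order given by `π`. The welfare lost when player `i` moves is
at most his marginal contribution at the profile just before, `dev x sstar (suffixSet π i)`,
because his effort `x i` is nonnegative; these losses telescope to the welfare of `sstar` minus
that of `x`.
-/

open Finset

section WelfareSharing

variable {n m : ℕ}

/-- Effort vector at project `j` from effort matrix `x`. -/
def proj (x : Fin n → Fin m → ℝ) (j : Fin m) : Fin n → ℝ := fun i => x i j

/-- Marginal contribution of player `i` to the value of project `j`. -/
noncomputable def marg (v : Fin m → (Fin n → ℝ) → ℝ) (x : Fin n → Fin m → ℝ) (j : Fin m)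
    (i : Fin n) : ℝ :=
  v j (proj x j) - v j (Function.update (proj x j) i 0)

/-- Proportional-share utility of player `i` in the welfare sharing game. -/
noncomputable def shareUtil (N : Fin m → Finset (Fin n)) (v : Fin m → (Fin n → ℝ) → ℝ)
    (x : Fin n → Fin m → ℝ) (i : Fin n) : ℝ :=
  ∑ j ∈ Finset.univ.filter (fun j : Fin m => i ∈ N j),
    (marg v x j i / ∑ k ∈ N j, marg v x j k) * v j (proj x j)

/-- Social welfare: total value produced. -/
noncomputable def totalValue (v : Fin m → (Fin n → ℝ) → ℝ) (x : Fin n → Fin m → ℝ) : ℝ :=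
  ∑ j : Fin m, v j (proj x j)

/-- Budget-feasible nonnegative effort matrices. -/
def Feasible (B : Fin n → ℝ) (x : Fin n → Fin m → ℝ) : Prop :=
  (∀ i j, 0 ≤ x i j) ∧ ∀ i, ∑ j : Fin m, x i j ≤ B i

section Telescoping

theorem sum_perm_sub_succ (π : Equiv.Perm (Fin n)) (W : ℕ → ℝ) :
    ∑ i, (W (π i) - W (π i + 1)) = W 0 - W n := by
  rw [Equiv.sum_comp π (fun k : Fin n => W k - W (k + 1)),
    Fin.sum_univ_eq_sum_range (fun k => W k - W (k + 1)), sum_range_sub']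

def rankSuffix (π : Equiv.Perm (Fin n)) (k : ℕ) : Finset (Fin n) :=
  univ.filter fun l => k ≤ (π l : ℕ)

theorem suffixSet_eq_rankSuffix (π : Equiv.Perm (Fin n)) (i : Fin n) :
    suffixSet π i = rankSuffix π (π i) := by
  ext l
  simp only [suffixSet, rankSuffix, mem_filter, mem_univ, true_and]
  exact Fin.le_def

variable {S : Type*}

theorem dev_rankSuffix_zero (x s : Fin n → S) (π : Equiv.Perm (Fin n)) :
    dev x s (rankSuffix π 0) = s := by
  funext l
  simp [dev, rankSuffix]

theorem dev_rankSuffix_self (x s : Fin n → S) (π : Equiv.Perm (Fin n)) :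
    dev x s (rankSuffix π n) = x := by
  funext l
  simp [dev, rankSuffix, (π l).isLt]

theorem dev_rankSuffix_succ (x s : Fin n → S) (π : Equiv.Perm (Fin n)) (i : Fin n) :
    dev x s (rankSuffix π (π i + 1)) = Function.update (dev x s (suffixSet π i)) i (x i) := by
  funext l
  rcases eq_or_ne l i with rfl | hl
  · simp [dev, rankSuffix]
  · have hrank : (π l : ℕ) ≠ π i := fun h => hl (π.injective (Fin.val_injective h))
    have hmem : π i + 1 ≤ (π l : ℕ) ↔ π i ≤ π l := by rw [Fin.le_def]; omega
    simp only [dev, rankSuffix, suffixSet, Function.update_of_ne hl, mem_filter, mem_univ,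
      true_and, hmem]

theorem dev_nonneg [Preorder S] [Zero S] {x s : Fin n → S} (hx : 0 ≤ x) (hs : 0 ≤ s)
    (C : Finset (Fin n)) : 0 ≤ dev x s C := fun i => by
  unfold dev
  split_ifs
  exacts [hs i, hx i]

theorem sub_le_sum_sub_update_dev [Preorder S] [Zero S] {F : (Fin n → S) → ℝ}
    (hF : Monotone F) {x : Fin n → S} (hx : 0 ≤ x) (s : Fin n → S) (π : Equiv.Perm (Fin n)) :
    F s - F x ≤ ∑ i, (F (dev x s (suffixSet π i)) -
      F (Function.update (dev x s (suffixSet π i)) i 0)) := by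
  have hstep : ∀ i, F (dev x s (rankSuffix π (π i))) - F (dev x s (rankSuffix π (π i + 1))) ≤
      F (dev x s (suffixSet π i)) - F (Function.update (dev x s (suffixSet π i)) i 0) := by
    intro i
    rw [dev_rankSuffix_succ, ← suffixSet_eq_rankSuffix]
    exact sub_le_sub_left (hF (Function.update_mono (hx i))) _
  calc F s - F x = ∑ i, (F (dev x s (rankSuffix π (π i))) -
        F (dev x s (rankSuffix π (π i + 1)))) := by
        rw [sum_perm_sub_succ π fun k => F (dev x s (rankSuffix π k)),
          dev_rankSuffix_zero, dev_rankSuffix_self]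
    _ ≤ _ := sum_le_sum fun i _ => hstep i

end Telescoping

theorem div_le_div_sum_mul {ι : Type*} {s : Finset ι} {c : ι → ℝ} {i : ι} {γ V : ℝ}
    (hc : ∀ k ∈ s, 0 ≤ c k) (hi : i ∈ s) (hV : 0 ≤ V) (hsum : ∑ k ∈ s, c k ≤ γ * V) :
    c i / γ ≤ c i / (∑ k ∈ s, c k) * V := by
  have hci : 0 ≤ c i := hc i hi
  have hci_le : c i ≤ ∑ k ∈ s, c k := single_le_sum hc hi
  have hrhs : 0 ≤ c i / (∑ k ∈ s, c k) * V :=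
    mul_nonneg (div_nonneg hci (hci.trans hci_le)) hV
  rcases le_or_gt γ 0 with hγ | hγ
  · exact (div_nonpos_of_nonneg_of_nonpos hci hγ).trans hrhs
  rcases hci.eq_or_lt with hzero | hpos
  · simp [← hzero]
  rw [div_mul_eq_mul_div, div_le_div_iff₀ hγ (hpos.trans_le hci_le)]
  calc c i * ∑ k ∈ s, c k ≤ c i * (γ * V) := mul_le_mul_of_nonneg_left hsum hci
    _ = c i * V * γ := by ring

variable {v : Fin m → (Fin n → ℝ) → ℝ} {x : Fin n → Fin m → ℝ}

theorem Feasible.nonneg {B : Fin n → ℝ} (hx : Feasible B x) : 0 ≤ x := fun i j => hx.1 i j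

theorem totalValue_mono (hmono : ∀ j, Monotone (v j)) : Monotone (totalValue v) :=
  fun _ _ hxy => sum_le_sum fun j _ => hmono j fun i => hxy i j

theorem marg_nonneg (hmono : ∀ j, Monotone (v j)) (hx : 0 ≤ x) (j : Fin m) (i : Fin n) :
    0 ≤ marg v x j i :=
  sub_nonneg.2 (hmono j (update_le_self_iff.2 (hx i j)))

theorem sum_marg_eq_totalValue_sub (i : Fin n) :
    ∑ j, marg v x j i = totalValue v x - totalValue v (Function.update x i 0) := by
  have hproj : ∀ j, proj (Function.update x i 0) j = Function.update (proj x j) i 0 := by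
    intro j
    funext l
    rcases eq_or_ne l i with rfl | hl <;> simp [proj, Function.update_of_ne, *]
  simp only [marg, totalValue, hproj, sum_sub_distrib]

theorem sum_filter_marg_eq_sum (N : Fin m → Finset (Fin n))
    (hdep : ∀ (j : Fin m) (y : Fin n → ℝ) (i : Fin n), i ∉ N j →
      v j (Function.update y i 0) = v j y) (i : Fin n) :
    ∑ j ∈ univ.filter (fun j => i ∈ N j), marg v x j i = ∑ j, marg v x j i := by
  refine sum_filter_of_ne fun j _ hj => ?_
  by_contra hi
  exact hj (sub_eq_zero.2 (hdep j (proj x j) i hi).symm)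

theorem sum_marg_div_le_shareUtil (N : Fin m → Finset (Fin n)) {γ : ℝ}
    (hv0 : ∀ j, 0 ≤ v j (proj x j)) (hmono : ∀ j, Monotone (v j)) (hx : 0 ≤ x)
    (hgroup : ∀ j, ∑ k ∈ N j, marg v x j k ≤ γ * v j (proj x j)) (i : Fin n) :
    (∑ j ∈ univ.filter (fun j => i ∈ N j), marg v x j i) / γ ≤ shareUtil N v x i := by
  rw [shareUtil, sum_div]
  exact sum_le_sum fun j hj =>
    div_le_div_sum_mul (fun k _ => marg_nonneg hmono hx j k) (mem_filter.1 hj).2 (hv0 j) (hgroup j)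

theorem welfare_sharing_smooth_general
    (N : Fin m → Finset (Fin n))
    (v : Fin m → (Fin n → ℝ) → ℝ)
    (hv0 : ∀ j x, 0 ≤ v j x)
    (hmono : ∀ (j : Fin m) (x y : Fin n → ℝ), (∀ i, x i ≤ y i) → v j x ≤ v j y)
    (hdep : ∀ (j : Fin m) (x : Fin n → ℝ) (i : Fin n), i ∉ N j →
      v j (Function.update x i 0) = v j x)
    (gsize : Fin m → ℕ) (maxG : ℕ) (hle : ∀ j, gsize j ≤ maxG)
    (hgroup : ∀ (j : Fin m) (x : Fin n → Fin m → ℝ),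
      ∑ k ∈ N j, marg v x j k ≤ (gsize j : ℝ) * v j (proj x j))
    (B : Fin n → ℝ) :
    (∀ (i : Fin n) (x : Fin n → Fin m → ℝ), Feasible B x →
      shareUtil N v x i ≥ (1 / (maxG : ℝ)) *
        ∑ j ∈ Finset.univ.filter (fun j : Fin m => i ∈ N j), marg v x j i) ∧
    (∀ sstar : Fin n → Fin m → ℝ, Feasible B sstar →
      (∀ x, Feasible B x → totalValue v x ≤ totalValue v sstar) →
      ∀ x, Feasible B x → ∀ π : Equiv.Perm (Fin n),
        ∑ i, shareUtil N v (dev x sstar (suffixSet π i)) i ≥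
          (1 / (maxG : ℝ)) * totalValue v sstar -
            (1 / (maxG : ℝ)) * totalValue v x) := by
  have hmono' : ∀ j, Monotone (v j) := fun j x y hxy => hmono j x y hxy
  have hgroup' : ∀ j x, ∑ k ∈ N j, marg v x j k ≤ (maxG : ℝ) * v j (proj x j) := fun j x =>
    (hgroup j x).trans (mul_le_mul_of_nonneg_right (by exact_mod_cast hle j) (hv0 _ _))
  have hshare : ∀ i x, 0 ≤ x → (1 / (maxG : ℝ)) *
      ∑ j ∈ univ.filter (fun j => i ∈ N j), marg v x j i ≤ shareUtil N v x i := fun i x hx => by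
    rw [one_div_mul_eq_div]
    exact sum_marg_div_le_shareUtil N (fun j => hv0 j _) hmono' hx (fun j => hgroup' j x) i
  refine ⟨fun i x hx => hshare i x hx.nonneg, fun sstar hs _ x hx π => ?_⟩
  calc (1 / (maxG : ℝ)) * totalValue v sstar - (1 / (maxG : ℝ)) * totalValue v x
      = (1 / (maxG : ℝ)) * (totalValue v sstar - totalValue v x) := (mul_sub _ _ _).symm
    _ ≤ (1 / (maxG : ℝ)) * ∑ i, ∑ j, marg v (dev x sstar (suffixSet π i)) j i := by
      simp only [sum_marg_eq_totalValue_sub]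
      gcongr
      exact sub_le_sum_sub_update_dev (totalValue_mono hmono') hx.nonneg sstar π
    _ = ∑ i, (1 / (maxG : ℝ)) * ∑ j ∈ univ.filter (fun j => i ∈ N j),
          marg v (dev x sstar (suffixSet π i)) j i := by
      simp only [mul_sum, sum_filter_marg_eq_sum N hdep]
    _ ≤ ∑ i, shareUtil N v (dev x sstar (suffixSet π i)) i :=
      sum_le_sum fun i _ => hshare i _ (dev_nonneg hx.nonneg hs.nonneg _)

/-- in the welfare sharing game with skill-group-wise decreasing
marginal contributions, every player gets at least a 1/max_j |𝒢_j| fraction of his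
marginal contribution, and hence the game is (γ,γ)-coalitionally smooth with
γ = 1/max_j |𝒢_j|. -/
theorem welfare_sharing_smooth
    (N : Fin m → Finset (Fin n))
    (v : Fin m → (Fin n → ℝ) → ℝ)
    (hv0 : ∀ j x, 0 ≤ v j x)
    (hmono : ∀ (j : Fin m) (x y : Fin n → ℝ), (∀ i, x i ≤ y i) → v j x ≤ v j y)
    (hdep : ∀ (j : Fin m) (x : Fin n → ℝ) (i : Fin n), i ∉ N j →
      v j (Function.update x i 0) = v j x)
    (gsize : Fin m → ℕ) (maxG : ℕ) (hmaxG : 0 < maxG) (hle : ∀ j, gsize j ≤ maxG)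
    (hgroup : ∀ (j : Fin m) (x : Fin n → Fin m → ℝ),
      ∑ k ∈ N j, marg v x j k ≤ (gsize j : ℝ) * v j (proj x j))
    (B : Fin n → ℝ) :
    (∀ (i : Fin n) (x : Fin n → Fin m → ℝ), Feasible B x →
      shareUtil N v x i ≥ (1 / (maxG : ℝ)) *
        ∑ j ∈ Finset.univ.filter (fun j : Fin m => i ∈ N j), marg v x j i) ∧
    (∀ sstar : Fin n → Fin m → ℝ, Feasible B sstar →
      (∀ x, Feasible B x → totalValue v x ≤ totalValue v sstar) →
      ∀ x, Feasible B x → ∀ π : Equiv.Perm (Fin n),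
        ∑ i, shareUtil N v (dev x sstar (suffixSet π i)) i ≥
          (1 / (maxG : ℝ)) * totalValue v sstar -
            (1 / (maxG : ℝ)) * totalValue v x) :=
  welfare_sharing_smooth_general N v hv0 hmono hdep gsize maxG hle hgroup B
end WelfareSharing
end
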